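/- arXiv:1701.03301 — 16 statements merged into one kernel-verified Lean document; each statement's English description precedes it below -/
import Mathlib

section
/- Let F be a proper filter on ℕ and let V be an ultrafilter on ℕ. Then for every proper filter G on ℕ with F ⊕ V ⊆ G, the family F(V,G) is a proper filter на ℕ satisfying F ⊆ F(V,G) and G ⊆ F(V,G) ⊕ V. -/
open Filter Set

/-- The rightward shift `A − n = {m ∈ ℕ+ | m + n ∈ A}`. -/
def shiftSet (A : Set ℕ+) (n : ℕ+) : Set ℕ+ := {m | m + n ∈ A}

/-- The pseudo-sum of two filters on `ℕ+`:
`A ∈ F ⊕ G ↔ {n | A − n ∈ G} ∈ F`. -/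
def psum (F G : Filter ℕ+) : Filter ℕ+ where
  sets := {A | {n | shiftSet A n ∈ G} ∈ F}
  univ_sets := Filter.univ_mem' fun _ => Filter.univ_mem' fun _ => trivial
  sets_of_superset := by
    intro A B hA hAB
    refine Filter.mem_of_superset hA fun n hn => ?_
    exact Filter.mem_of_superset hn fun m hm => hAB hm
  inter_sets := by
    intro A B hA hB
    refine Filter.mem_of_superset (Filter.inter_mem hA hB) ?_
    rintro n ⟨h1, h2⟩
    exact Filter.inter_mem h1 h2

/-- `A_V = {n | A − n ∈ V}`. -/
def subV (A : Set ℕ+) (V : Ultrafilter ℕ+) : Set ℕ+ :=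
  {n | shiftSet A n ∈ (V : Filter ℕ+)}

/-- The family `F(V,G) = {B | B ⊇ F' ∩ A_V for some F' ∈ F, A ∈ G}`. -/
def fvg (F : Filter ℕ+) (V : Ultrafilter ℕ+) (G : Filter ℕ+) : Filter ℕ+ where
  sets := {B | ∃ F' ∈ F, ∃ A ∈ G, F' ∩ subV A V ⊆ B}
  univ_sets := ⟨Set.univ, Filter.univ_mem, Set.univ, Filter.univ_mem, fun _ _ => trivial⟩
  sets_of_superset := by
    rintro A B ⟨F', hF', A', hA', hsub⟩ hAB
    exact ⟨F', hF', A', hA', hsub.trans hAB⟩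
  inter_sets := by
    rintro A B ⟨F1, hF1, A1, hA1, h1⟩ ⟨F2, hF2, A2, hA2, h2⟩
    refine ⟨F1 ∩ F2, Filter.inter_mem hF1 hF2, A1 ∩ A2, Filter.inter_mem hA1 hA2, ?_⟩
    rintro n ⟨⟨hn1, hn2⟩, hv⟩
    have hv1 : n ∈ subV A1 V := Filter.mem_of_superset hv fun m hm => hm.1
    have hv2 : n ∈ subV A2 V := Filter.mem_of_superset hv fun m hm => hm.2
    exact ⟨h1 ⟨hn1, hv1⟩, h2 ⟨hn2, hv2⟩⟩

/-- `FS(X)`: all finite sums of distinct elements of `X`. -/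
def FS (X : Set ℕ+) : Set ℕ+ :=
  {n | ∃ F : Finset ℕ+, F.Nonempty ∧ ↑F ⊆ X ∧ ∑ x ∈ F, (x : ℕ) = (n : ℕ)}

/-- A filter `F` is additive if `F ⊆ F ⊕ V` for every ultrafilter `V ⊇ F`. -/
def AdditiveFilter (F : Filter ℕ+) : Prop :=
  ∀ V : Ultrafilter ℕ+, (∀ A : Set ℕ+, A ∈ F → A ∈ (V : Filter ℕ+)) →
    ∀ A : Set ℕ+, A ∈ F → A ∈ psum F ↑V

/-- The pseudo-sum of two ultrafilters, as an ultrafilter. -/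
def usum (U V : Ultrafilter ℕ+) : Ultrafilter ℕ+ :=
  Ultrafilter.ofComplNotMemIff (psum ↑U ↑V) (by
    intro s
    show ¬ {n | shiftSet sᶜ n ∈ (V : Filter ℕ+)} ∈ (U : Filter ℕ+) ↔
      {n | shiftSet s n ∈ (V : Filter ℕ+)} ∈ (U : Filter ℕ+)
    have h : {n : ℕ+ | shiftSet sᶜ n ∈ (V : Filter ℕ+)}
        = {n : ℕ+ | shiftSet s n ∈ (V : Filter ℕ+)}ᶜ := by
      ext n
      show (shiftSet s n)ᶜ ∈ (V : Filter ℕ+) ↔ ¬ shiftSet s n ∈ (V : Filter ℕ+)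
      exact Ultrafilter.compl_mem_iff_notMem
    rw [h]
    exact Ultrafilter.compl_notMem_iff)

/-- `Fil(C) = ⋂_{U ∈ C} U`. -/
def filOf (C : Set (Ultrafilter ℕ+)) : Filter ℕ+ where
  sets := {A | ∀ U ∈ C, A ∈ (U : Filter ℕ+)}
  univ_sets := fun _ _ => Filter.univ_mem
  sets_of_superset := fun h hAB U hU => Filter.mem_of_superset (h U hU) hAB
  inter_sets := fun h1 h2 U hU => Filter.inter_mem (h1 U hU) (h2 U hU)

/-- `Cl(F) = {U ∈ βℕ | F ⊆ U}`. -/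
def clOf (F : Filter ℕ+) : Set (Ultrafilter ℕ+) :=
  {U | ∀ A : Set ℕ+, A ∈ F → A ∈ (U : Filter ℕ+)}

lemma FS_mono {Y Z : Set ℕ+} (h : Y ⊆ Z) : FS Y ⊆ FS Z := by
  rintro n ⟨F, hne, hsub, hsum⟩
  exact ⟨F, hne, hsub.trans h, hsum⟩

/-- The filter `FS_X = {A | A ⊇ FS(X \ F) for some finite F ⊆ X}`. -/
def fsFilter (X : Set ℕ+) : Filter ℕ+ where
  sets := {A | ∃ F : Finset ℕ+, ↑F ⊆ X ∧ FS (X \ ↑F) ⊆ A}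
  univ_sets := ⟨∅, by simp, fun _ _ => trivial⟩
  sets_of_superset := by
    rintro A B ⟨F, hF, hFS⟩ hAB
    exact ⟨F, hF, hFS.trans hAB⟩
  inter_sets := by
    rintro A B ⟨F1, hF1, h1⟩ ⟨F2, hF2, h2⟩
    refine ⟨F1 ∪ F2, ?_, fun n hn =>
      ⟨h1 (FS_mono (Set.diff_subset_diff_right ?_) hn),
       h2 (FS_mono (Set.diff_subset_diff_right ?_) hn)⟩⟩
    · intro x hx
      simp only [Finset.coe_union, Set.mem_union] at hx
      exact hx.elim (fun h => hF1 h) (fun h => hF2 h)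
    · intro x hx
      simp only [Finset.coe_union, Set.mem_union]
      exact Or.inl hx
    · intro x hx
      simp only [Finset.coe_union, Set.mem_union]
      exact Or.inr hx

/-- `A` is finitely additively large (FAL): for every `n` there are
`x₁ < … < xₙ` with `FS({x₁,…,xₙ}) ⊆ A`. -/
def FAL (A : Set ℕ+) : Prop :=
  ∀ n : ℕ, ∃ x : Fin n → ℕ+, StrictMono x ∧ FS (Set.range x) ⊆ A

/-- The family `{A | Aᶜ is not FAL}`. -/
def falFamily : Set (Set ℕ+) := {A | ¬ FAL Aᶜ}

/-- For a proper filter `F`, an ultrafilter `V`, and a proper filter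
`G ⊇ F ⊕ V`, the family `F(V,G)` is a proper filter with `F ⊆ F(V,G)` and
`G ⊆ F(V,G) ⊕ V`. -/
theorem statement0 (F : Filter ℕ+) (hF : F.NeBot) (V : Ultrafilter ℕ+)
    (G : Filter ℕ+) (hG : G.NeBot)
    (hFVG : ∀ A : Set ℕ+, A ∈ psum F ↑V → A ∈ G) :
    (fvg F V G).NeBot ∧
    (∀ A : Set ℕ+, A ∈ F → A ∈ fvg F V G) ∧
    (∀ A : Set ℕ+, A ∈ G → A ∈ psum (fvg F V G) ↑V) := by
  refine ⟨?_, ?_, ?_⟩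
  · rw [Filter.neBot_iff]
    intro hbot
    have h0 : (∅ : Set ℕ+) ∈ fvg F V G := by rw [hbot]; exact Filter.mem_bot
    obtain ⟨F', hF', A, hA, hsub⟩ := h0
    have hdisj : F' ∩ subV A V = ∅ := Set.subset_empty_iff.mp hsub
    have hcompl : F' ⊆ subV Aᶜ V := by
      intro n hn
      have hnot : n ∉ subV A V := fun h => (Set.eq_empty_iff_forall_notMem.mp hdisj n) ⟨hn, h⟩
      have : (shiftSet A n)ᶜ ∈ (V : Filter ℕ+) := Ultrafilter.compl_mem_iff_notMem.mpr hnot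
      have heq : shiftSet Aᶜ n = (shiftSet A n)ᶜ := rfl
      simpa [subV, heq] using this
    have hmem : Aᶜ ∈ psum F ↑V := by
      show {n | shiftSet Aᶜ n ∈ (V : Filter ℕ+)} ∈ F
      exact Filter.mem_of_superset hF' hcompl
    have : Aᶜ ∈ G := hFVG _ hmem
    have : (∅ : Set ℕ+) ∈ G := by
      have := Filter.inter_mem hA this
      simpa using this
    exact hG.ne (Filter.empty_mem_iff_bot.mp this)
  · intro A hA
    refine ⟨A, hA, Set.univ, Filter.univ_mem, fun n hn => hn.1⟩
  · intro A hA
    show {n | shiftSet A n ∈ (V : Filter ℕ+)} ∈ fvg F V G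
    exact ⟨Set.univ, Filter.univ_mem, A, hA, fun n hn => hn.2⟩
end

section
/- Let F be a proper filter on ℕ and let V, W be ultrafilters on ℕ with F ⊕ V ⊆ W. If U is an ultrafilter on ℕ with F(V,W) ⊆ U, then U ⊕ V = W. -/
open Filter Set

/-- If `F ⊕ V ⊆ W` and `U` is an ultrafilter with `F(V,W) ⊆ U`,
then `U ⊕ V = W`. -/
theorem statement1 (F : Filter ℕ+) (hF : F.NeBot) (V W : Ultrafilter ℕ+)
    (hFVW : ∀ A : Set ℕ+, A ∈ psum F ↑V → A ∈ (W : Filter ℕ+))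
    (U : Ultrafilter ℕ+)
    (hU : ∀ A : Set ℕ+, A ∈ fvg F V ↑W → A ∈ (U : Filter ℕ+)) :
    psum ↑U ↑V = (W : Filter ℕ+) := by
  have hle : psum ↑U ↑V ≤ (W : Filter ℕ+) := by
    intro A hA
    -- show A ∈ psum U V, i.e. subV A V ∈ U
    apply hU
    exact ⟨Set.univ, Filter.univ_mem, A, hA, fun n hn => hn.2⟩
  have heq : psum ↑U ↑V = ((usum U V : Ultrafilter ℕ+) : Filter ℕ+) := rfl
  rw [heq] at hle ⊢
  exact W.unique hle
end

section
/- Let F be a proper filter on ℕ and let V, W be ultrafilters on ℕ with F ⊕ V ⊆ W. If U is an ultrafilter on ℕ with U ⊕ V = W and F ⊆ U, then F(V,W) ⊆ U. -/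
open Filter Set

/-- If `F ⊕ V ⊆ W`, `U ⊕ V = W` and `F ⊆ U`, then `F(V,W) ⊆ U`. -/
theorem statement2 (F : Filter ℕ+) (hF : F.NeBot) (V W : Ultrafilter ℕ+)
    (hFVW : ∀ A : Set ℕ+, A ∈ psum F ↑V → A ∈ (W : Filter ℕ+))
    (U : Ultrafilter ℕ+)
    (hUV : psum ↑U ↑V = (W : Filter ℕ+))
    (hFU : ∀ A : Set ℕ+, A ∈ F → A ∈ (U : Filter ℕ+)) :
    ∀ A : Set ℕ+, A ∈ fvg F V ↑W → A ∈ (U : Filter ℕ+) := by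
  rintro B ⟨F', hF', A, hA, hsub⟩
  have hAW : A ∈ psum ↑U ↑V := by rw [hUV]; exact hA
  have h1 : {n | shiftSet A n ∈ (V : Filter ℕ+)} ∈ (U : Filter ℕ+) := hAW
  by_contra hB
  have hBc : Bᶜ ∈ (U : Filter ℕ+) := Ultrafilter.compl_mem_iff_notMem.mpr hB
  have hmem : F' ∩ (Bᶜ ∩ {n | shiftSet A n ∈ (V : Filter ℕ+)}) ∈ (U : Filter ℕ+) :=
    Filter.inter_mem (hFU F' hF') (Filter.inter_mem hBc h1)
  obtain ⟨n, hn1, hn2, hn3⟩ := Filter.nonempty_of_mem hmem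
  exact hn2 (hsub ⟨hn1, hn3⟩)
end

section
/- Let F be a proper filter on ℕ and let V, W be ultrafilters on ℕ. Then F ⊕ V ⊆ W if and only if there exists an ultrafilter U on ℕ with F ⊆ U and W = U ⊕ V. -/
open Filter Set

lemma subV_compl (A : Set ℕ+) (V : Ultrafilter ℕ+) : subV Aᶜ V = (subV A V)ᶜ := by
  ext n
  have h : shiftSet Aᶜ n = (shiftSet A n)ᶜ := rfl
  simp only [subV, Set.mem_setOf_eq, h, Set.mem_compl_iff]
  exact Ultrafilter.compl_mem_iff_notMem

lemma mem_psum_iff (F G : Filter ℕ+) (A : Set ℕ+) :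
    A ∈ psum F G ↔ {n | shiftSet A n ∈ G} ∈ F := Iff.rfl

/-- `F ⊕ V ⊆ W` iff `W = U ⊕ V` for some ultrafilter `U ⊇ F`. -/
theorem statement3 (F : Filter ℕ+) (hF : F.NeBot) (V W : Ultrafilter ℕ+) :
    (∀ A : Set ℕ+, A ∈ psum F ↑V → A ∈ (W : Filter ℕ+)) ↔
      ∃ U : Ultrafilter ℕ+, (∀ A : Set ℕ+, A ∈ F → A ∈ (U : Filter ℕ+)) ∧
        (W : Filter ℕ+) = psum ↑U ↑V := by
  constructor
  · intro h
    have hne : ∀ F' ∈ F, ∀ A ∈ (W : Filter ℕ+), (F' ∩ subV A V).Nonempty := by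
      intro F' hF' A hA
      by_contra hemp
      rw [Set.not_nonempty_iff_eq_empty] at hemp
      have hsub : F' ⊆ subV Aᶜ V := by
        intro n hn
        rw [subV_compl]
        intro hv
        have : n ∈ F' ∩ subV A V := ⟨hn, hv⟩
        rw [hemp] at this
        exact this
      have hmem : Aᶜ ∈ psum F ↑V := by
        rw [mem_psum_iff]
        exact Filter.mem_of_superset hF' hsub
      exact (Ultrafilter.compl_notMem_iff.2 hA) (h _ hmem)
    have hNeBot : (fvg F V ↑W).NeBot := by
      refine Filter.neBot_iff.2 fun hbot => ?_
      have hmem : (∅ : Set ℕ+) ∈ fvg F V ↑W := by rw [hbot]; exact Filter.mem_bot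
      obtain ⟨F', hF', A, hA, hsub⟩ := hmem
      obtain ⟨x, hx⟩ := hne F' hF' A hA
      exact hsub hx
    let U := @Ultrafilter.of _ (fvg F V ↑W) hNeBot
    have hUle : (↑U : Filter ℕ+) ≤ fvg F V ↑W := Ultrafilter.of_le _
    have hFU : ∀ B ∈ F, B ∈ (U : Filter ℕ+) := fun B hB =>
      hUle ⟨B, hB, Set.univ, Filter.univ_mem, fun n hn => hn.1⟩
    have hWU : ∀ A ∈ (W : Filter ℕ+), subV A V ∈ (U : Filter ℕ+) := fun A hA =>
      hUle ⟨Set.univ, Filter.univ_mem, A, hA, fun n hn => hn.2⟩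
    refine ⟨U, hFU, ?_⟩
    ext A
    rw [mem_psum_iff]
    constructor
    · exact fun hA => hWU A hA
    · intro hA
      by_contra hAW
      have hc : Aᶜ ∈ (W : Filter ℕ+) := Ultrafilter.compl_mem_iff_notMem.2 hAW
      have h2 := hWU _ hc
      rw [subV_compl] at h2
      exact (Ultrafilter.compl_notMem_iff.2 (hA : subV A V ∈ (U : Filter ℕ+))) h2
  · rintro ⟨U, hFU, hW⟩ A hA
    rw [hW, mem_psum_iff]
    exact hFU _ hA
end

section
/- If U is an idempotent ultrafilter on ℕ (i.e., U ⊕ U = U), then every set A ∈ U is additively large: there exists an infinite set X ⊆ ℕ with FS(X) ⊆ A. -/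
open Filter Set

section Aux

lemma mem_psum {F G : Filter ℕ+} {A : Set ℕ+} :
    A ∈ psum F G ↔ {n | shiftSet A n ∈ G} ∈ F := Iff.rfl

lemma shift_shift (A : Set ℕ+) (m n : ℕ+) :
    shiftSet (shiftSet A n) m = shiftSet A (m + n) := by
  ext k
  simp only [shiftSet, Set.mem_setOf_eq, add_assoc]

/-- `star U A = A ∩ {n | A - n ∈ U}`. -/
def starSet (U : Ultrafilter ℕ+) (A : Set ℕ+) : Set ℕ+ := A ∩ subV A U

lemma starSet_mem {U : Ultrafilter ℕ+} (hU : psum ↑U ↑U = (U : Filter ℕ+))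
    {A : Set ℕ+} (hA : A ∈ (U : Filter ℕ+)) : starSet U A ∈ (U : Filter ℕ+) := by
  have h2 : subV A U ∈ (U : Filter ℕ+) := by
    have := hA; rw [← hU] at this; exact this
  exact Filter.inter_mem hA h2

lemma starSet_shift {U : Ultrafilter ℕ+} (hU : psum ↑U ↑U = (U : Filter ℕ+))
    {A : Set ℕ+} {n : ℕ+} (hn : n ∈ starSet U A) :
    shiftSet (starSet U A) n ∈ (U : Filter ℕ+) := by
  have hB : shiftSet A n ∈ (U : Filter ℕ+) := hn.2
  have key : shiftSet (starSet U A) n = starSet U (shiftSet A n) := by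
    ext m
    show m + n ∈ A ∩ subV A U ↔ m ∈ shiftSet A n ∩ subV (shiftSet A n) U
    constructor
    · rintro ⟨h1, h2⟩
      refine ⟨h1, ?_⟩
      show shiftSet (shiftSet A n) m ∈ (U : Filter ℕ+)
      rw [shift_shift]; exact h2
    · rintro ⟨h1, h2⟩
      refine ⟨h1, ?_⟩
      have h2' : shiftSet (shiftSet A n) m ∈ (U : Filter ℕ+) := h2
      rw [shift_shift] at h2'; exact h2'
  rw [key]
  exact starSet_mem hU hB

lemma gt_mem {U : Ultrafilter ℕ+} (hU : psum ↑U ↑U = (U : Filter ℕ+)) (k : ℕ+) :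
    {m : ℕ+ | k < m} ∈ (U : Filter ℕ+) := by
  have hsing : ∀ n : ℕ+, {n} ∉ (U : Filter ℕ+) := by
    intro n hn
    have h1 : ({n} : Set ℕ+) ∈ psum ↑U ↑U := by rw [hU]; exact hn
    have h2 : ({n} : Set ℕ+) ∩ {m | shiftSet {n} m ∈ (U : Filter ℕ+)} ∈ (U : Filter ℕ+) :=
      Filter.inter_mem hn h1
    obtain ⟨m, hm1, hm2⟩ := (U : Filter ℕ+).nonempty_of_mem h2
    have hmn : m = n := hm1
    subst hmn
    have : shiftSet {m} m = (∅ : Set ℕ+) := by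
      ext q
      simp only [shiftSet, Set.mem_setOf_eq, Set.mem_singleton_iff, Set.mem_empty_iff_false,
        iff_false]
      intro h
      exact (PNat.lt_add_left m q).ne' h
    rw [Set.mem_setOf_eq, this] at hm2
    exact (U : Filter ℕ+).empty_notMem hm2
  have hfin : ({m : ℕ+ | k < m}ᶜ : Set ℕ+).Finite := by
    have : ({m : ℕ+ | k < m}ᶜ : Set ℕ+) ⊆ (fun m : ℕ+ => (m : ℕ)) ⁻¹' (Set.Iic (k : ℕ)) := by
      intro m hm
      simp only [Set.mem_compl_iff, Set.mem_setOf_eq, not_lt] at hm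
      exact_mod_cast hm
    exact Set.Finite.subset ((Set.finite_Iic (k : ℕ)).preimage
      (Set.injOn_of_injective PNat.coe_injective)) this
  rw [Ultrafilter.mem_coe, ← Ultrafilter.compl_notMem_iff]
  intro hc
  obtain ⟨a, _, ha⟩ := Ultrafilter.eq_pure_of_finite_mem hfin hc
  exact hsing a (by rw [ha]; exact rfl)

/-- A set is good for `U` if it is in `U` and all its shifts by its own elements are in `U`. -/
def goodSet (U : Ultrafilter ℕ+) (C : Set ℕ+) : Prop :=
  C ∈ (U : Filter ℕ+) ∧ ∀ n ∈ C, shiftSet C n ∈ (U : Filter ℕ+)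

open Classical in
noncomputable def pickElt (C : Set ℕ+) : ℕ+ :=
  if h : C.Nonempty then h.choose else 1

lemma pickElt_mem {C : Set ℕ+} (h : C.Nonempty) : pickElt C ∈ C := by
  rw [pickElt]
  rw [dif_pos h]
  exact h.choose_spec

noncomputable def nextC (C : Set ℕ+) : Set ℕ+ :=
  C ∩ shiftSet C (pickElt C) ∩ {m | pickElt C < m}

lemma goodSet_next {U : Ultrafilter ℕ+} (hU : psum ↑U ↑U = (U : Filter ℕ+))
    {C : Set ℕ+} (hC : goodSet U C) : goodSet U (nextC C) := by
  have hne : C.Nonempty := (U : Filter ℕ+).nonempty_of_mem hC.1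
  have hx : pickElt C ∈ C := pickElt_mem hne
  constructor
  · exact Filter.inter_mem (Filter.inter_mem hC.1 (hC.2 _ hx)) (gt_mem hU _)
  · intro n hn
    obtain ⟨⟨hn1, hn2⟩, _⟩ := hn
    have e : shiftSet (nextC C) n =
        shiftSet C n ∩ shiftSet (shiftSet C (pickElt C)) n ∩ shiftSet {m | pickElt C < m} n :=
      rfl
    rw [e, shift_shift]
    refine Filter.inter_mem (Filter.inter_mem (hC.2 _ hn1) ?_) ?_
    · exact hC.2 _ hn2
    · refine Filter.mem_of_superset (gt_mem hU (pickElt C)) ?_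
      intro m hm
      show pickElt C < m + n
      exact lt_of_lt_of_le hm (le_add_of_nonneg_right (le_of_lt n.pos))
end Aux

section Seq
variable (U : Ultrafilter ℕ+) (A : Set ℕ+)

noncomputable def Cseq : ℕ → Set ℕ+
  | 0 => starSet U A
  | k + 1 => nextC (Cseq k)

noncomputable def xseq (k : ℕ) : ℕ+ := pickElt (Cseq U A k)

variable {U A}

lemma goodSet_Cseq (hU : psum ↑U ↑U = (U : Filter ℕ+)) (hA : A ∈ (U : Filter ℕ+)) :
    ∀ k, goodSet U (Cseq U A k)
  | 0 => ⟨starSet_mem hU hA, fun _ hn => starSet_shift hU hn⟩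
  | k + 1 => goodSet_next hU (goodSet_Cseq hU hA k)

lemma Cseq_succ_subset (k : ℕ) : Cseq U A (k + 1) ⊆ Cseq U A k :=
  fun _ hm => hm.1.1

lemma Cseq_antitone {k l : ℕ} (h : k ≤ l) : Cseq U A l ⊆ Cseq U A k := by
  induction l with
  | zero => rw [Nat.le_zero.mp h]
  | succ l ih =>
    rcases Nat.lt_or_ge k (l + 1) with h' | h'
    · exact (Cseq_succ_subset l).trans (ih (Nat.lt_succ_iff.mp h'))
    · rw [le_antisymm h h']

lemma xseq_mem (hU : psum ↑U ↑U = (U : Filter ℕ+)) (hA : A ∈ (U : Filter ℕ+)) (k : ℕ) :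
    xseq U A k ∈ Cseq U A k :=
  pickElt_mem ((U : Filter ℕ+).nonempty_of_mem (goodSet_Cseq hU hA k).1)

lemma Cseq_succ_shift (k : ℕ) :
    Cseq U A (k + 1) ⊆ shiftSet (Cseq U A k) (xseq U A k) :=
  fun _ hm => hm.1.2

lemma xseq_strictMono (hU : psum ↑U ↑U = (U : Filter ℕ+)) (hA : A ∈ (U : Filter ℕ+)) :
    StrictMono (xseq U A) := by
  apply strictMono_nat_of_lt_succ
  intro k
  exact (xseq_mem hU hA (k + 1)).2

lemma sum_mem_Cseq (hU : psum ↑U ↑U = (U : Filter ℕ+)) (hA : A ∈ (U : Filter ℕ+)) :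
    ∀ (G : Finset ℕ) (hG : G.Nonempty),
      ∃ p : ℕ+, p ∈ Cseq U A (G.min' hG) ∧ (p : ℕ) = ∑ i ∈ G, (xseq U A i : ℕ) := by
  intro G
  induction G using Finset.strongInduction with
  | _ G ih =>
    intro hG
    set k := G.min' hG with hk
    have hkG : k ∈ G := G.min'_mem hG
    rcases Finset.eq_singleton_or_nontrivial hkG with hsing | hnt
    · refine ⟨xseq U A k, xseq_mem hU hA k, ?_⟩
      rw [hsing, Finset.sum_singleton]
    · have hG' : (G.erase k).Nonempty := by
        obtain ⟨a, ha, b, hb, hab⟩ := hnt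
        rcases eq_or_ne a k with rfl | h
        · exact ⟨b, Finset.mem_erase.mpr ⟨hab.symm, hb⟩⟩
        · exact ⟨a, Finset.mem_erase.mpr ⟨h, ha⟩⟩
      obtain ⟨p', hp', hsum'⟩ := ih (G.erase k) (Finset.erase_ssubset hkG) hG'
      set k' := (G.erase k).min' hG' with hk'
      have hk'G : k' ∈ G.erase k := Finset.min'_mem _ _
      have hkk' : k + 1 ≤ k' := by
        have h1 : k ≤ k' := G.min'_le k' (Finset.mem_of_mem_erase hk'G)
        have h2 : k' ≠ k := (Finset.mem_erase.mp hk'G).1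
        omega
      have hp'' : p' ∈ Cseq U A (k + 1) := Cseq_antitone hkk' hp'
      have hmem : p' + xseq U A k ∈ Cseq U A k := Cseq_succ_shift k hp''
      refine ⟨p' + xseq U A k, hmem, ?_⟩
      have : (↑(p' + xseq U A k) : ℕ) = (p' : ℕ) + (xseq U A k : ℕ) := rfl
      rw [this, hsum', ← Finset.add_sum_erase G _ hkG, add_comm]

end Seq

/-- Every member of an idempotent ultrafilter is additively large. -/
theorem statement4 (U : Ultrafilter ℕ+) (hU : psum ↑U ↑U = (U : Filter ℕ+))
    (A : Set ℕ+) (hA : A ∈ (U : Filter ℕ+)) :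
    ∃ X : Set ℕ+, X.Infinite ∧ FS X ⊆ A := by
  classical
  refine ⟨Set.range (xseq U A), Set.infinite_range_of_injective
    (xseq_strictMono hU hA).injective, ?_⟩
  rintro n ⟨F, hne, hsub, hsum⟩
  have hinj : Set.InjOn (xseq U A) ((xseq U A) ⁻¹' ↑F) :=
    Set.injOn_of_injective (xseq_strictMono hU hA).injective
  set G : Finset ℕ := F.preimage (xseq U A) hinj with hG
  have hbij : Set.BijOn (xseq U A) ((xseq U A) ⁻¹' ↑F) ↑F := by
    refine ⟨fun x hx => hx, hinj, fun y hy => ?_⟩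
    obtain ⟨i, hi⟩ := hsub hy
    exact ⟨i, by simp [hi, hy], hi⟩
  have himage : G.image (xseq U A) = F := Finset.image_preimage_of_bij _ _ hbij
  have hGne : G.Nonempty := by
    obtain ⟨y, hy⟩ := hne
    obtain ⟨i, hi⟩ := hsub hy
    exact ⟨i, Finset.mem_preimage.mpr (hi ▸ hy)⟩
  have hsumG : ∑ i ∈ G, (xseq U A i : ℕ) = ∑ y ∈ F, (y : ℕ) := by
    rw [← himage, Finset.sum_image]
    intro a ha b hb hab
    exact (xseq_strictMono hU hA).injective hab
  obtain ⟨p, hp, hpsum⟩ := sum_mem_Cseq hU hA G hGne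
  have hpn : p = n := PNat.coe_injective (by rw [hpsum, hsumG, hsum])
  have : p ∈ Cseq U A 0 := Cseq_antitone (Nat.zero_le _) hp
  exact hpn ▸ this.1
end

section
/- For every infinite set X ⊆ ℕ, the family FS_X = {A ⊆ ℕ : A ⊇ FS(X \ F) for some finite F ⊂ X} is a proper filter on ℕ containing FS(X), it satisfies FS_X ⊆ FS_X ⊕ FS_X, and it is an additive filter. -/
open Filter Set

lemma mem_fsFilter {X A : Set ℕ+} :
    A ∈ fsFilter X ↔ ∃ F : Finset ℕ+, ↑F ⊆ X ∧ FS (X \ ↑F) ⊆ A := Iff.rfl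

lemma key_shift {X : Set ℕ+} {F : Finset ℕ+} (hF : ↑F ⊆ X) {n : ℕ+}
    (hn : n ∈ FS (X \ ↑F)) : shiftSet (FS (X \ ↑F)) n ∈ fsFilter X := by
  obtain ⟨G, hGne, hGsub, hGsum⟩ := hn
  refine ⟨F ∪ G, ?_, ?_⟩
  · intro x hx
    simp only [Finset.coe_union, Set.mem_union] at hx
    exact hx.elim (fun h => hF h) (fun h => (hGsub h).1)
  · rintro m ⟨H, hHne, hHsub, hHsum⟩
    have hHG : Disjoint H G := by
      rw [Finset.disjoint_left]
      intro x hxH hxG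
      exact (hHsub hxH).2 (by simp [hxG])
    refine ⟨H ∪ G, hHne.mono Finset.subset_union_left, ?_, ?_⟩
    · intro x hx
      simp only [Finset.coe_union, Set.mem_union] at hx
      refine hx.elim (fun h => ?_) (fun h => hGsub h)
      have := hHsub h
      refine ⟨this.1, fun hc => this.2 ?_⟩
      simp only [Finset.coe_union, Set.mem_union]
      exact Or.inl hc
    · rw [Finset.sum_union hHG, hHsum, hGsum, PNat.add_coe]

lemma key_mem {X : Set ℕ+} {A : Set ℕ+} (hA : A ∈ fsFilter X) {n : ℕ+}
    {F : Finset ℕ+} (hF : ↑F ⊆ X) (hsub : FS (X \ ↑F) ⊆ A)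
    (hn : n ∈ FS (X \ ↑F)) : shiftSet A n ∈ fsFilter X :=
  Filter.mem_of_superset (key_shift hF hn) (fun m hm => hsub hm)

/-- For infinite `X`, the family `FS_X` is a proper filter containing
`FS(X)`, it satisfies `FS_X ⊆ FS_X ⊕ FS_X`, and it is additive. -/
theorem statement5 (X : Set ℕ+) (hX : X.Infinite) :
    (fsFilter X).NeBot ∧ FS X ∈ fsFilter X ∧
    (∀ A : Set ℕ+, A ∈ fsFilter X → A ∈ psum (fsFilter X) (fsFilter X)) ∧
    AdditiveFilter (fsFilter X) := by
  obtain ⟨F0, hF0, hsub0⟩ : FS X ∈ fsFilter X :=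
    ⟨∅, by simp, FS_mono (by simp)⟩
  refine ⟨?_, ⟨∅, by simp, FS_mono (by simp)⟩, ?_, ?_⟩
  · refine ⟨fun hbot => ?_⟩
    have : (∅ : Set ℕ+) ∈ fsFilter X := by rw [hbot]; exact Filter.mem_bot
    obtain ⟨F, hF, hsub⟩ := this
    obtain ⟨x, hx⟩ := (hX.diff F.finite_toSet).nonempty
    exact hsub ⟨{x}, Finset.singleton_nonempty x, by simpa using hx, by rw [Finset.sum_singleton]⟩
  · rintro A ⟨F, hF, hsub⟩
    rw [mem_psum]
    exact Filter.mem_of_superset (⟨F, hF, fun _ h => h⟩ : FS (X \ ↑F) ∈ fsFilter X)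
      (fun n hn => key_mem ⟨F, hF, hsub⟩ hF hsub hn)
  · rintro V hV A ⟨F, hF, hsub⟩
    rw [mem_psum]
    exact Filter.mem_of_superset (⟨F, hF, fun _ h => h⟩ : FS (X \ ↑F) ∈ fsFilter X)
      (fun n hn => hV _ (key_mem ⟨F, hF, hsub⟩ hF hsub hn))
end

section
/- A proper filter F on ℕ is additive if and only if F ⊆ U ⊕ V for every pair of ultrafilters U, V on ℕ with F ⊆ U and F ⊆ V. -/
open Filter Set

/-- A proper filter `F` is additive iff `F ⊆ U ⊕ V` for all
ultrafilters `U, V ⊇ F`. -/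
theorem statement6 (F : Filter ℕ+) (hF : F.NeBot) :
    AdditiveFilter F ↔
      ∀ U V : Ultrafilter ℕ+,
        (∀ A : Set ℕ+, A ∈ F → A ∈ (U : Filter ℕ+)) →
        (∀ A : Set ℕ+, A ∈ F → A ∈ (V : Filter ℕ+)) →
        ∀ A : Set ℕ+, A ∈ F → A ∈ psum ↑U ↑V := by
  constructor
  · intro hadd U V hU hV A hA
    have h := hadd V hV A hA
    exact hU _ h
  · intro h V hV A hA
    by_contra hB
    set B : Set ℕ+ := {n | shiftSet A n ∈ (V : Filter ℕ+)} with hBdef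
    have hne : (F ⊓ 𝓟 Bᶜ).NeBot := by
      rw [Filter.inf_principal_neBot_iff]
      intro s hs
      by_contra hempty
      rw [Set.not_nonempty_iff_eq_empty] at hempty
      have : s ⊆ B := by
        intro x hx
        by_contra hxB
        exact Set.eq_empty_iff_forall_notMem.mp hempty x ⟨hx, hxB⟩
      have hBF : B ∈ F := Filter.mem_of_superset hs this
      exact hB hBF
    obtain ⟨U, hU⟩ := Ultrafilter.exists_le (F ⊓ 𝓟 Bᶜ)
    have hUF : ∀ A' : Set ℕ+, A' ∈ F → A' ∈ (U : Filter ℕ+) :=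
      fun A' hA' => hU (Filter.mem_inf_of_left hA')
    have hBc : Bᶜ ∈ (U : Filter ℕ+) := hU (Filter.mem_inf_of_right (Filter.mem_principal_self _))
    have hBin : B ∈ (U : Filter ℕ+) := h U V hUF hV A hA
    exact (Ultrafilter.compl_notMem_iff.mpr hBin) hBc
end

section
/- Let C be a nonempty closed subset of the space of ultrafilters on ℕ (with the Stone topology, whose basic open sets are {U : A ∈ U} for A ⊆ ℕ) that is closed under the pseudo-sum ⊕ (i.e., U, V ∈ C implies U ⊕ V ∈ C). Then Fil(C) = ⋂_{U ∈ C} U is an additive filter on ℕ. -/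
open Filter Set

/-- If `C` is a nonempty closed sub-semigroup of `(βℕ, ⊕)`, then
`Fil(C) = ⋂_{U ∈ C} U` is an additive filter. -/
theorem statement7 (C : Set (Ultrafilter ℕ+)) (hne : C.Nonempty)
    (hcl : IsClosed C)
    (hsub : ∀ U ∈ C, ∀ V ∈ C, usum U V ∈ C) :
    AdditiveFilter (filOf C) := by
  intro V hV A hA
  -- First show V ∈ C using closedness
  have hVC : V ∈ C := by
    by_contra hVnot
    have hopen : IsOpen Cᶜ := hcl.isOpen_compl
    obtain ⟨t, ht, hVt, htsub⟩ :=
      ultrafilterBasis_is_basis.exists_subset_of_mem_open (show V ∈ Cᶜ from hVnot) hopen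
    obtain ⟨s, rfl⟩ := ht
    have hsc : sᶜ ∈ filOf C := by
      intro U hU
      have : s ∉ (U : Filter ℕ+) := fun hsU => htsub hsU hU
      exact Ultrafilter.compl_mem_iff_notMem.mpr this
    exact (Ultrafilter.compl_mem_iff_notMem.mp (hV _ hsc)) hVt
  -- Now A ∈ psum (filOf C) V
  show {n | shiftSet A n ∈ (V : Filter ℕ+)} ∈ filOf C
  intro U hU
  have hUV : usum U V ∈ C := hsub U hU V hVC
  have hAUV : A ∈ (usum U V : Filter ℕ+) := hA _ hUV
  exact hAUV
end

section
/- Let F be an additive proper filter on ℕ. Then Cl(F) = {U ∈ βℕ : F ⊆ U} is a nonempty closed subset of βℕ that is closed under the pseudo-sum ⊕. Moreover, the operations are mutually inverse: Fil(Cl(F)) = F for every additive filter F, and Cl(Fil(C)) = C for every nonempty closed ⊕-closed subset C of βℕ, where Fil(C) = ⋂_{U ∈ C} U. -/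
open Filter Set

/-- For an additive proper filter `F`, `Cl(F)` is a nonempty closed
`⊕`-closed subset of `βℕ` with `Fil(Cl(F)) = F`; and `Cl(Fil(C)) = C` for every
nonempty closed `⊕`-closed `C ⊆ βℕ`. -/
theorem statement8 :
    (∀ F : Filter ℕ+, F.NeBot → AdditiveFilter F →
      (clOf F).Nonempty ∧ IsClosed (clOf F) ∧
      (∀ U ∈ clOf F, ∀ V ∈ clOf F, usum U V ∈ clOf F) ∧
      filOf (clOf F) = F) ∧
    (∀ C : Set (Ultrafilter ℕ+), C.Nonempty → IsClosed C →
      (∀ U ∈ C, ∀ V ∈ C, usum U V ∈ C) →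
      clOf (filOf C) = C) := by
  constructor
  · intro F hF hadd
    obtain ⟨U0, hU0⟩ := Ultrafilter.exists_le F
    refine ⟨⟨U0, fun A hA => hU0 hA⟩, ?_, ?_, ?_⟩
    · have h : clOf F = ⋂ A ∈ {A : Set ℕ+ | A ∈ F}, {U : Ultrafilter ℕ+ | A ∈ U} := by
        ext U
        simp only [clOf, Set.mem_setOf_eq, Set.mem_iInter]
        rfl
      rw [h]
      exact isClosed_biInter fun A _ => ultrafilter_isClosed_basic A
    · intro U hU V hV A hA
      have h1 : A ∈ psum F ↑V := hadd V hV A hA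
      have h2 : {n | shiftSet A n ∈ (V : Filter ℕ+)} ∈ (U : Filter ℕ+) := hU _ h1
      exact h2
    · apply Filter.ext
      intro A
      constructor
      · intro h
        by_contra hA
        have hne : Filter.NeBot (F ⊓ Filter.principal Aᶜ) := by
          rw [Filter.inf_principal_neBot_iff]
          intro B hB
          rcases Set.not_subset.mp (fun hsub => hA (Filter.mem_of_superset hB hsub)) with
            ⟨x, hxB, hxA⟩
          exact ⟨x, hxB, hxA⟩
        obtain ⟨U, hU⟩ := Ultrafilter.exists_le (F ⊓ Filter.principal Aᶜ)
        have hUF : ∀ B ∈ F, B ∈ (U : Filter ℕ+) := fun B hB =>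
          hU (Filter.mem_inf_of_left hB)
        have hAc : Aᶜ ∈ (U : Filter ℕ+) :=
          hU (Filter.mem_inf_of_right (Filter.mem_principal_self _))
        have hAU : A ∈ (U : Filter ℕ+) := h U hUF
        exact absurd hAU (Ultrafilter.compl_mem_iff_notMem.mp hAc)
      · intro hA U hU
        exact hU A hA
  · intro C hCne hCcl _
    ext U
    constructor
    · intro hU
      by_contra hUC
      obtain ⟨S, hSb, hUS, hsub⟩ :=
        ultrafilterBasis_is_basis.exists_subset_of_mem_open hUC hCcl.isOpen_compl
      obtain ⟨A, rfl⟩ := hSb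
      have hAc : Aᶜ ∈ filOf C := by
        intro V hV
        have : A ∉ (V : Filter ℕ+) := fun hAV => hsub hAV hV
        exact Ultrafilter.compl_mem_iff_notMem.mpr this
      have := hU Aᶜ hAc
      exact absurd hUS (Ultrafilter.compl_mem_iff_notMem.mp this)
    · intro hU A hA
      exact hA U hU
end

section
/- Let F be an additive proper filter on ℕ. Then for every ultrafilter V on ℕ with F ⊆ V, the pseudo-sum F ⊕ V is an additive filter. -/
open Filter Set

lemma shiftSet_shiftSet (A : Set ℕ+) (m n : ℕ+) :
    shiftSet (shiftSet A m) n = shiftSet A (n + m) := by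
  ext k
  simp [shiftSet, add_assoc]

lemma fvg_neBot (F : Filter ℕ+) (V W : Ultrafilter ℕ+)
    (hW : ∀ A : Set ℕ+, A ∈ psum F ↑V → A ∈ (W : Filter ℕ+)) :
    (fvg F V ↑W).NeBot := by
  constructor
  intro h
  have hemp : (∅ : Set ℕ+) ∈ fvg F V ↑W := by
    rw [h]; exact Filter.mem_bot
  obtain ⟨F', hF', A, hA, hsub⟩ := hemp
  have hsub' : F' ⊆ subV Aᶜ V := by
    intro x hx
    rw [subV_compl]
    intro hxv
    exact hsub ⟨hx, hxv⟩
  have hAc : Aᶜ ∈ psum F ↑V := by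
    rw [mem_psum]
    exact Filter.mem_of_superset hF' hsub'
  have h1 : Aᶜ ∈ (W : Filter ℕ+) := hW _ hAc
  have h2 : A ∉ (W : Filter ℕ+) := Ultrafilter.compl_mem_iff_notMem.mp h1
  exact h2 hA

/-- If `F` is an additive proper filter and `V ⊇ F` is an
ultrafilter, then `F ⊕ V` is an additive filter. -/
theorem statement9 (F : Filter ℕ+) (hF : F.NeBot) (hadd : AdditiveFilter F)
    (V : Ultrafilter ℕ+)
    (hFV : ∀ A : Set ℕ+, A ∈ F → A ∈ (V : Filter ℕ+)) :
    AdditiveFilter (psum F ↑V) := by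
  intro W hW A hA
  haveI : (fvg F V ↑W).NeBot := fvg_neBot F V W hW
  obtain ⟨U, hU⟩ := Ultrafilter.exists_le (fvg F V (W : Filter ℕ+))
  have hFU : ∀ S : Set ℕ+, S ∈ F → S ∈ (U : Filter ℕ+) := fun S hS =>
    hU ⟨S, hS, Set.univ, Filter.univ_mem, fun x hx => hx.1⟩
  have hWU : ∀ S : Set ℕ+, S ∈ (W : Filter ℕ+) → subV S V ∈ (U : Filter ℕ+) :=
    fun S hS => hU ⟨Set.univ, Filter.univ_mem, S, hS, fun x hx => hx.2⟩
  -- `U ⊕ V ⊆ W`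
  have hUVW : ∀ S : Set ℕ+, S ∈ psum ↑U ↑V → S ∈ (W : Filter ℕ+) := by
    intro S hS
    by_contra hSW
    have h1 : Sᶜ ∈ (W : Filter ℕ+) := Ultrafilter.compl_mem_iff_notMem.mpr hSW
    have h2 : subV Sᶜ V ∈ (U : Filter ℕ+) := hWU _ h1
    rw [subV_compl] at h2
    have h3 : subV S V ∈ (U : Filter ℕ+) := hS
    exact Ultrafilter.compl_mem_iff_notMem.mp h2 h3
  -- `F ⊆ V ⊕ U`
  have hFZ : ∀ S : Set ℕ+, S ∈ F → S ∈ ((usum V U : Ultrafilter ℕ+) : Filter ℕ+) := by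
    intro S hS
    have h1 : S ∈ psum F ↑U := hadd U hFU S hS
    exact hFV _ h1
  -- main argument
  have hB : {n | shiftSet A n ∈ (V : Filter ℕ+)} ∈ F := hA
  set B := {n | shiftSet A n ∈ (V : Filter ℕ+)} with hBdef
  have hC : B ∈ psum F ↑(usum V U) := hadd (usum V U) hFZ B hB
  rw [mem_psum] at hC
  rw [mem_psum, mem_psum]
  refine Filter.mem_of_superset hC ?_
  intro k hk
  have hk' : {n | shiftSet B (n + k) ∈ (U : Filter ℕ+)} ∈ (V : Filter ℕ+) := by
    have h0 : {n | shiftSet (shiftSet B k) n ∈ (U : Filter ℕ+)} ∈ (V : Filter ℕ+) := hk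
    simpa [shiftSet_shiftSet] using h0
  show shiftSet {m | shiftSet A m ∈ (W : Filter ℕ+)} k ∈ (V : Filter ℕ+)
  refine Filter.mem_of_superset hk' ?_
  intro n hn
  show shiftSet A (n + k) ∈ (W : Filter ℕ+)
  apply hUVW
  rw [mem_psum]
  have heq : {i | shiftSet (shiftSet A (n + k)) i ∈ (V : Filter ℕ+)} = shiftSet B (n + k) := by
    ext i
    simp only [Set.mem_setOf_eq, shiftSet_shiftSet]
    rfl
  rw [heq]
  exact hn
end

section
/- Let F be an additive proper filter on ℕ, and let V be an ultrafilter on ℕ with F ⊕ V ⊆ V. Then F(V,V) is an additive filter. -/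
open Filter Set

/-- If `F` is an additive proper filter and `V` is an ultrafilter
with `F ⊕ V ⊆ V`, then `F(V,V)` is an additive filter. -/
theorem statement10 (F : Filter ℕ+) (hF : F.NeBot) (hadd : AdditiveFilter F)
    (V : Ultrafilter ℕ+)
    (hFVV : ∀ A : Set ℕ+, A ∈ psum F ↑V → A ∈ (V : Filter ℕ+)) :
    AdditiveFilter (fvg F V ↑V) := by
  intro W hW B hB
  obtain ⟨F', hF', A, hA, hsub⟩ := hB
  have hFW : ∀ S : Set ℕ+, S ∈ F → S ∈ (W : Filter ℕ+) := fun S hS =>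
    hW S ⟨S, hS, Set.univ, Filter.univ_mem, Set.inter_subset_left⟩
  have hFadd : {n | shiftSet F' n ∈ (W : Filter ℕ+)} ∈ F := hadd W hFW F' hF'
  show {n | shiftSet B n ∈ (W : Filter ℕ+)} ∈ fvg F V ↑V
  refine ⟨{n | shiftSet F' n ∈ (W : Filter ℕ+)}, hFadd, A, hA, ?_⟩
  rintro n ⟨hn1, hn2⟩
  have h1 : subV (shiftSet A n) V ∈ (W : Filter ℕ+) :=
    hW _ ⟨Set.univ, Filter.univ_mem, shiftSet A n, hn2, Set.inter_subset_right⟩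
  have h2 : shiftSet F' n ∩ subV (shiftSet A n) V ⊆ shiftSet B n := by
    rintro m ⟨hm1, hm2⟩
    apply hsub
    refine ⟨hm1, ?_⟩
    show shiftSet A (m + n) ∈ (V : Filter ℕ+)
    have : shiftSet A (m + n) = shiftSet (shiftSet A n) m := by
      ext k
      simp only [shiftSet, Set.mem_setOf_eq, add_assoc]
    rw [this]
    exact hm2
  exact Filter.mem_of_superset (Filter.inter_mem hn1 h1) h2
end

section
/- If a proper filter F on ℕ is maximal with respect to inclusion among additive filters on ℕ, then F is an ultrafilter and F ⊕ F = F, i.e., F is an idempotent ultrafilter. -/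
open Filter Set

attribute [local instance] Ultrafilter.add Ultrafilter.addSemigroup

lemma psum_coe_eq (U V : Ultrafilter ℕ+) : psum ↑U ↑V = ↑(U + V) := by
  ext A
  have h1 : A ∈ psum ↑U ↑V ↔ {n : ℕ+ | {m : ℕ+ | m + n ∈ A} ∈ (V : Filter ℕ+)} ∈ (U : Filter ℕ+) :=
    Iff.rfl
  have h2 : A ∈ ((U + V : Ultrafilter ℕ+) : Filter ℕ+) ↔
      (∀ᶠ n in (U : Filter ℕ+), ∀ᶠ m in (V : Filter ℕ+), n + m ∈ A) :=
    Ultrafilter.eventually_add U V (· ∈ A)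
  rw [h1, h2]
  simp only [Filter.eventually_iff]
  constructor
  · intro h
    refine Filter.mem_of_superset h fun n hn => Filter.mem_of_superset hn fun m hm => ?_
    simpa [add_comm] using hm
  · intro h
    refine Filter.mem_of_superset h fun n hn => Filter.mem_of_superset hn fun m hm => ?_
    simpa [add_comm] using hm

/-- A filter that is maximal with respect to inclusion among the
additive (proper) filters is an idempotent ultrafilter. -/
theorem statement11 (F : Filter ℕ+) (hF : F.NeBot) (hadd : AdditiveFilter F)
    (hmax : ∀ G : Filter ℕ+, G.NeBot → AdditiveFilter G →
      (∀ A : Set ℕ+, A ∈ F → A ∈ G) → G = F) :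
    (∃ U : Ultrafilter ℕ+, (U : Filter ℕ+) = F) ∧ psum F F = F := by
  classical
  set S : Set (Ultrafilter ℕ+) := {U | (U : Filter ℕ+) ≤ F} with hS
  have hSclosed : IsClosed S := by
    have : S = ⋂ A ∈ F.sets, {U : Ultrafilter ℕ+ | A ∈ U} := by
      ext U
      simp only [hS, Set.mem_setOf_eq, Set.mem_iInter, Filter.le_def]
      rfl
    rw [this]
    exact isClosed_biInter fun A _ => ultrafilter_isClosed_basic A
  have hSne : S.Nonempty := Ultrafilter.exists_le F
  have hSadd : ∀ U ∈ S, ∀ W ∈ S, U + W ∈ S := by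
    intro U hU W hW
    intro A hA
    rw [← psum_coe_eq]
    have hAF : A ∈ psum F ↑W := hadd W (fun B hB => hW hB) A hA
    exact hU hAF
  obtain ⟨U, hUS, hUidem⟩ := exists_idempotent_in_compact_add_subsemigroup
    Ultrafilter.continuous_add_left S hSne hSclosed.isCompact hSadd
  have hUadd : AdditiveFilter ↑U := by
    intro V hV A hA
    have hVU : (V : Filter ℕ+) ≤ (U : Filter ℕ+) := fun s hs => hV s hs
    have hVeq : V = U := Ultrafilter.coe_le_coe.mp hVU
    subst hVeq
    rw [psum_coe_eq, hUidem]
    exact hA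
  have hFU : (U : Filter ℕ+) = F := hmax ↑U U.neBot hUadd (fun A hA => hUS hA)
  refine ⟨⟨U, hFU⟩, ?_⟩
  rw [← hFU, psum_coe_eq, hUidem]
end

section
/- For every additive proper filter F on ℕ there exists an ultrafilter V on ℕ such that F ⊆ V and F ⊕ V ⊆ V. -/
open Filter Set

attribute [local instance] Ultrafilter.add Ultrafilter.addSemigroup

/-- For every additive proper filter `F` there is an ultrafilter
`V ⊇ F` with `F ⊕ V ⊆ V`. -/
theorem statement13 (F : Filter ℕ+) (hF : F.NeBot) (hadd : AdditiveFilter F) :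
    ∃ V : Ultrafilter ℕ+, (∀ A : Set ℕ+, A ∈ F → A ∈ (V : Filter ℕ+)) ∧
      (∀ A : Set ℕ+, A ∈ psum F ↑V → A ∈ (V : Filter ℕ+)) := by
  set S : Set (Ultrafilter ℕ+) := clOf F with hS
  have hmem : ∀ U : Ultrafilter ℕ+, U ∈ S ↔ ∀ A : Set ℕ+, A ∈ F → A ∈ (U : Filter ℕ+) :=
    fun U => Iff.rfl
  have hne : S.Nonempty := by
    obtain ⟨U, hU⟩ := Filter.exists_ultrafilter_le F
    exact ⟨U, fun A hA => hU hA⟩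
  have hclosed : IsClosed S := by
    have : S = ⋂ A ∈ F.sets, {U : Ultrafilter ℕ+ | A ∈ U} := by
      ext U; constructor
      · intro h; exact Set.mem_iInter₂.mpr fun A hA => h A hA
      · intro h A hA; exact Set.mem_iInter₂.mp h A hA
    rw [this]
    exact isClosed_biInter fun A _ => ultrafilter_isClosed_basic A
  have hcompact : IsCompact S := hclosed.isCompact
  -- S is a subsemigroup
  have hsub : ∀ U ∈ S, ∀ V ∈ S, U + V ∈ S := by
    intro U hU V hV A hA
    have h1 : A ∈ psum F ↑V := hadd V hV A hA
    have h2 : {n : ℕ+ | shiftSet A n ∈ (V : Filter ℕ+)} ∈ F := h1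
    have h3 : {n : ℕ+ | shiftSet A n ∈ (V : Filter ℕ+)} ∈ (U : Filter ℕ+) := hU _ h2
    have : ∀ᶠ n in (U : Filter ℕ+), ∀ᶠ m in (V : Filter ℕ+), n + m ∈ A := by
      refine Filter.mem_of_superset h3 fun n hn => ?_
      refine Filter.mem_of_superset hn fun m hm => ?_
      show n + m ∈ A
      rw [add_comm]; exact hm
    exact this
  obtain ⟨V, hVS, hidem⟩ := exists_idempotent_in_compact_add_subsemigroup
    Ultrafilter.continuous_add_left S hne hcompact hsub
  refine ⟨V, hVS, fun A hA => ?_⟩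
  have h2 : {n : ℕ+ | shiftSet A n ∈ (V : Filter ℕ+)} ∈ F := hA
  have h3 : {n : ℕ+ | shiftSet A n ∈ (V : Filter ℕ+)} ∈ (V : Filter ℕ+) := hVS _ h2
  have h4 : A ∈ ((V + V : Ultrafilter ℕ+) : Filter ℕ+) := by
    have : ∀ᶠ n in (V : Filter ℕ+), ∀ᶠ m in (V : Filter ℕ+), n + m ∈ A := by
      refine Filter.mem_of_superset h3 fun n hn => ?_
      refine Filter.mem_of_superset hn fun m hm => ?_
      show n + m ∈ A
      rw [add_comm]; exact hm
    exact this
  rwa [hidem] at h4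
end

section
/- For every additively large set A ⊆ ℕ there exists an idempotent ultrafilter U on ℕ with A ∈ U. -/
open Filter Set

attribute [local instance] Ultrafilter.add Ultrafilter.addSemigroup

lemma hindmanFS_sum {a : Stream' ℕ+} {m : ℕ+} (hm : m ∈ Hindman.FS a) :
    ∃ s : Finset ℕ, s.Nonempty ∧ ∑ i ∈ s, (a.get i : ℕ) = (m : ℕ) := by
  induction hm with
  | head' a => exact ⟨{0}, Finset.singleton_nonempty _, by simp [Stream'.head]⟩
  | tail' a m h ih =>
    obtain ⟨s, hne, hsum⟩ := ih
    refine ⟨s.image (· + 1), hne.image _, ?_⟩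
    rw [Finset.sum_image (by intro x _ y _ hxy; simpa using hxy)]
    simpa [Stream'.tail, Stream'.get] using hsum
  | cons' a m h ih =>
    obtain ⟨s, hne, hsum⟩ := ih
    refine ⟨insert 0 (s.image (· + 1)), Finset.insert_nonempty _ _, ?_⟩
    rw [Finset.sum_insert (by simp), Finset.sum_image (by intro x _ y _ hxy; simpa using hxy)]
    have : ∑ i ∈ s, (a.get (i + 1) : ℕ) = (m : ℕ) := by
      simpa [Stream'.tail, Stream'.get] using hsum
    simp [Stream'.head, this, PNat.add_coe]

lemma psum_eq_add (U V : Ultrafilter ℕ+) : psum ↑U ↑V = ((U + V : Ultrafilter ℕ+) : Filter ℕ+) := by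
  apply Filter.ext
  intro A
  show {n | shiftSet A n ∈ (V : Filter ℕ+)} ∈ (U : Filter ℕ+) ↔ _
  refine Iff.trans ?_ ((Ultrafilter.eventually_add U V (· ∈ A)).symm)
  constructor
  · intro h
    filter_upwards [h] with n hn
    filter_upwards [hn] with m hm
    rwa [add_comm]
  · intro h
    filter_upwards [h] with n hn
    filter_upwards [hn] with m hm
    show m + n ∈ A
    rwa [add_comm]

/-- Every additively large set belongs to some idempotent
ultrafilter. -/
theorem statement14 (A : Set ℕ+)
    (hA : ∃ X : Set ℕ+, X.Infinite ∧ FS X ⊆ A) :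
    ∃ U : Ultrafilter ℕ+, psum ↑U ↑U = (U : Filter ℕ+) ∧
      A ∈ (U : Filter ℕ+) := by
  obtain ⟨X, hX, hXA⟩ := hA
  let e := hX.natEmbedding
  let a : Stream' ℕ+ := fun n => (e n : ℕ+)
  obtain ⟨U, hidem, hU⟩ := Hindman.exists_idempotent_ultrafilter_le_FS a
  refine ⟨U, by rw [psum_eq_add, hidem], ?_⟩
  have hsub : Hindman.FS a ⊆ A := by
    intro m hm
    obtain ⟨s, hne, hsum⟩ := hindmanFS_sum hm
    apply hXA
    refine ⟨s.image a.get, hne.image _, ?_, ?_⟩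
    · rintro x hx
      simp only [Finset.coe_image, Set.mem_image] at hx
      obtain ⟨i, _, rfl⟩ := hx
      exact (e i).2
    · rw [Finset.sum_image]
      · exact hsum
      · intro i _ j _ hij
        exact e.injective (Subtype.ext hij)
  exact Filter.mem_of_superset hU hsub
end

section
/- The family F = {A ⊆ ℕ : the complement of A is not finitely additively large} is an additive proper filter on ℕ. -/
open Filter Set

section Aux
open Hindman

-- membership producer
lemma mem_FS_of_sum {N : ℕ} {X : Set ℕ+} {x : Fin N → ℕ+} (hinj : Function.Injective x)
    (hx : ∀ i, x i ∈ X) (K : Finset (Fin N)) (hK : K.Nonempty) (p : ℕ+)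
    (hp : (p : ℕ) = ∑ i ∈ K, (x i : ℕ)) : p ∈ FS X := by
  refine ⟨K.image x, hK.image x, ?_, ?_⟩
  · intro a ha
    simp only [Finset.coe_image, Set.mem_image] at ha
    obtain ⟨i, _, rfl⟩ := ha
    exact hx i
  · rw [Finset.sum_image (fun a _ b _ h => hinj h)]
    exact hp.symm

-- membership consumer
lemma FS_range_elim {N : ℕ} {x : Fin N → ℕ+} (hinj : Function.Injective x) {p : ℕ+}
    (hp : p ∈ FS (Set.range x)) :
    ∃ K : Finset (Fin N), K.Nonempty ∧ (p : ℕ) = ∑ i ∈ K, (x i : ℕ) := by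
  obtain ⟨F, hne, hsub, hsum⟩ := hp
  refine ⟨Finset.univ.filter (fun i => x i ∈ F), ?_, ?_⟩
  · obtain ⟨a, ha⟩ := hne
    obtain ⟨i, rfl⟩ := hsub ha
    exact ⟨i, Finset.mem_filter.mpr ⟨Finset.mem_univ _, ha⟩⟩
  · have himg : (Finset.univ.filter (fun i => x i ∈ F)).image x = F := by
      ext a
      simp only [Finset.mem_image, Finset.mem_filter, Finset.mem_univ, true_and]
      constructor
      · rintro ⟨i, hi, rfl⟩; exact hi
      · intro ha; obtain ⟨i, rfl⟩ := hsub ha; exact ⟨i, ha, rfl⟩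
    have h2 : ∑ a ∈ F, (a : ℕ) = ∑ i ∈ Finset.univ.filter (fun i => x i ∈ F), (x i : ℕ) := by
      conv_lhs => rw [← himg]
      exact Finset.sum_image (fun a _ b _ h => hinj h)
    rw [← hsum, h2]

lemma FAL_univ : FAL (Set.univ : Set ℕ+) := by
  intro n
  refine ⟨fun i => ⟨i + 1, Nat.succ_pos _⟩, fun i j hij => ?_, fun p _ => trivial⟩
  change (i:ℕ)+1 < (j:ℕ)+1; exact Nat.succ_lt_succ hij

lemma not_FAL_empty : ¬ FAL (∅ : Set ℕ+) := by
  intro h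
  obtain ⟨x, hsm, hFS⟩ := h 1
  exact hFS (mem_FS_of_sum hsm.injective (fun i => Set.mem_range_self i) {0}
    ⟨0, Finset.mem_singleton_self 0⟩ (x 0) (by simp))

lemma FAL_of_subset {B C : Set ℕ+} (h : B ⊆ C) (hB : FAL B) : FAL C :=
  fun n => (hB n).imp fun x ⟨hsm, hFS⟩ => ⟨hsm, hFS.trans h⟩

lemma FAL_of_mem_ultra (V : Ultrafilter ℕ+) (hV : ∀ A ∈ falFamily, A ∈ (V : Filter ℕ+))
    {X : Set ℕ+} (hX : X ∈ (V : Filter ℕ+)) : FAL X := by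
  by_contra h
  have : Xᶜ ∈ falFamily := by simpa [falFamily] using h
  have := hV _ this
  exact (Ultrafilter.compl_notMem_iff.mpr hX) this

lemma additive_conj (V : Ultrafilter ℕ+) (hV : ∀ A ∈ falFamily, A ∈ (V : Filter ℕ+))
    (A : Set ℕ+) (hA : A ∈ falFamily) : {n | shiftSet A n ∈ (V : Filter ℕ+)} ∈ falFamily := by
  intro hE
  apply hA
  set E := {n | shiftSet A n ∈ (V : Filter ℕ+)}ᶜ with hEdef
  -- every element s of E satisfies shiftSet Aᶜ s ∈ V
  have hEV : ∀ s ∈ E, shiftSet Aᶜ s ∈ (V : Filter ℕ+) := by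
    intro s hs
    have : (shiftSet A s)ᶜ ∈ (V : Filter ℕ+) := Ultrafilter.compl_mem_iff_notMem.mpr hs
    have h2 : (shiftSet A s)ᶜ = shiftSet Aᶜ s := rfl
    rwa [h2] at this
  -- prove FAL Aᶜ
  intro n
  obtain ⟨e, he_sm, he_FS⟩ := hE n
  -- sums of e over K
  have hsval_pos : ∀ K : Finset (Fin n), K.Nonempty → 0 < ∑ i ∈ K, (e i : ℕ) := by
    intro K hK
    exact Finset.sum_pos (fun i _ => (e i).pos) hK
  set pK : ∀ K : Finset (Fin n), K.Nonempty → ℕ+ :=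
    fun K hK => ⟨∑ i ∈ K, (e i : ℕ), hsval_pos K hK⟩ with hpK
  have hpK_mem : ∀ K hK, pK K hK ∈ FS (Set.range e) := by
    intro K hK
    exact mem_FS_of_sum he_sm.injective (fun i => Set.mem_range_self i) K hK _ rfl
  set W : Set ℕ+ := ⋂ (K : Finset (Fin n)) (hK : K.Nonempty), shiftSet Aᶜ (pK K hK) with hW
  have hWV : W ∈ (V : Filter ℕ+) := by
    refine Filter.iInter_mem.mpr fun K => Filter.iInter_mem.mpr fun hK => ?_
    exact hEV _ (he_FS (hpK_mem K hK))
  obtain ⟨w, hw_sm, hw_FS⟩ := FAL_of_mem_ultra V hV hWV n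
  refine ⟨fun i => e i + w i, fun i j hij => add_lt_add (he_sm hij) (hw_sm hij), ?_⟩
  intro p hp
  have hinj : Function.Injective (fun i => e i + w i) := by
    intro i j h
    rcases lt_trichotomy i j with h' | h' | h'
    · exact absurd h (ne_of_lt (add_lt_add (he_sm h') (hw_sm h')))
    · exact h'
    · exact absurd h.symm (ne_of_lt (add_lt_add (he_sm h') (hw_sm h')))
  obtain ⟨K, hK, hsum⟩ := FS_range_elim hinj hp
  have hq_pos : 0 < ∑ i ∈ K, (w i : ℕ) := Finset.sum_pos (fun i _ => (w i).pos) hK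
  set q : ℕ+ := ⟨∑ i ∈ K, (w i : ℕ), hq_pos⟩ with hq
  have hq_mem : q ∈ W := hw_FS (mem_FS_of_sum hw_sm.injective (fun i => Set.mem_range_self i) K hK _ rfl)
  have hq2 : q ∈ shiftSet Aᶜ (pK K hK) := by
    have := Set.mem_iInter.mp hq_mem K
    exact Set.mem_iInter.mp this hK
  -- q + pK K hK ∈ Aᶜ, and p = q + pK K hK
  have hpeq : p = q + pK K hK := by
    apply PNat.coe_injective
    rw [hsum, PNat.add_coe]
    simp only [hq, hpK, PNat.mk_coe]
    rw [← Finset.sum_add_distrib]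
    apply Finset.sum_congr rfl
    intro i _
    push_cast
    ring
  rw [hpeq]
  exact hq2

attribute [local instance] Ultrafilter.semigroup Ultrafilter.mul

section Star
variable {M : Type*} [Semigroup M]

/-- The star set of `c` w.r.t. an idempotent ultrafilter. -/
def ustar (U : Ultrafilter M) (c : Set M) : Set M :=
  {m | m ∈ c ∧ {m' | m * m' ∈ c} ∈ U}

lemma ustar_subset (U : Ultrafilter M) (c : Set M) : ustar U c ⊆ c := fun _ h => h.1

lemma ustar_mem {U : Ultrafilter M} (hU : U * U = U) {c : Set M} (hc : c ∈ U) :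
    ustar U c ∈ U := by
  have h2 : {m | {m' | m * m' ∈ c} ∈ U} ∈ U := by
    have : c ∈ U * U := by rw [hU]; exact hc
    have := (Ultrafilter.eventually_mul U U (· ∈ c)).mp this
    exact this
  exact Filter.inter_mem hc h2

lemma ustar_shift {U : Ultrafilter M} (hU : U * U = U) {c : Set M} {m : M}
    (hm : m ∈ ustar U c) : {m' | m * m' ∈ ustar U c} ∈ U := by
  obtain ⟨_, h2⟩ := hm
  have h3 : ustar U {m' | m * m' ∈ c} ∈ U := ustar_mem hU h2
  refine Filter.mem_of_superset h3 ?_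
  rintro r ⟨hr1, hr2⟩
  refine ⟨hr1, ?_⟩
  have : {m' | r * m' ∈ {m' | m * m' ∈ c}} = {m' | (m * r) * m' ∈ c} := by
    ext m'; simp [mul_assoc]
  rwa [this] at hr2

end Star

section FUsg

instance : Mul (Finset ℕ) := ⟨fun a b => a ∪ b⟩

lemma fu_mul_def (a b : Finset ℕ) : a * b = a ∪ b := rfl

instance : Semigroup (Finset ℕ) where
  mul_assoc a b c := Finset.union_assoc a b c

/-- the stream of singletons -/
def sing : Stream' (Finset ℕ) := fun n => {n}

lemma head_drop_sing (N : ℕ) : (Stream'.drop N sing).head = ({N} : Finset ℕ) := by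
  rw [Stream'.head_drop]; rfl

lemma FP_sing_spec : ∀ (m : Finset ℕ), ∀ (a : Stream' (Finset ℕ)), m ∈ FP a →
    ∀ N, a = sing.drop N → m.Nonempty ∧ ∀ i ∈ m, N ≤ i := by
  intro m a hm
  induction hm with
  | head' a =>
    rintro N rfl
    rw [head_drop_sing]
    exact ⟨⟨N, Finset.mem_singleton_self N⟩, fun i hi => le_of_eq (Finset.mem_singleton.mp hi).symm⟩
  | tail' a m h ih =>
    rintro N rfl
    have := ih (N + 1) (by rw [Stream'.tail_eq_drop, Stream'.drop_drop, Nat.add_comm])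
    exact ⟨this.1, fun i hi => Nat.le_of_succ_le (this.2 i hi)⟩
  | cons' a m h ih =>
    rintro N rfl
    have hd := ih (N + 1) (by rw [Stream'.tail_eq_drop, Stream'.drop_drop, Nat.add_comm])
    constructor
    · exact ⟨N, by rw [fu_mul_def, head_drop_sing]; simp⟩
    · intro i hi
      rw [fu_mul_def, Finset.mem_union] at hi
      rcases hi with hi | hi
      · rw [head_drop_sing, Finset.mem_singleton] at hi
        omega
      · exact Nat.le_of_succ_le (hd.2 i hi)

/-- idempotent ultrafilter containing all tails of FP sing -/
theorem exists_idem_drop :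
    ∃ U : Ultrafilter (Finset ℕ), U * U = U ∧ ∀ n, {m | m ∈ FP (sing.drop n)} ∈ U := by
  let S : Set (Ultrafilter (Finset ℕ)) := ⋂ n, { U | ∀ᶠ m in U, m ∈ FP (sing.drop n) }
  have h := exists_idempotent_in_compact_subsemigroup ?_ S ?_ ?_ ?_
  · rcases h with ⟨U, hU, U_idem⟩
    exact ⟨U, U_idem, fun n => Set.mem_iInter.mp hU n⟩
  · exact Ultrafilter.continuous_mul_left
  · apply IsCompact.nonempty_iInter_of_sequence_nonempty_isCompact_isClosed
    · intro n U hU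
      filter_upwards [hU]
      rw [← Stream'.drop_drop, ← Stream'.tail_eq_drop]
      exact FP.tail _
    · intro n
      exact ⟨pure _, mem_pure.mpr <| FP.head _⟩
    · exact (ultrafilter_isClosed_basic _).isCompact
    · intro n
      apply ultrafilter_isClosed_basic
  · exact IsClosed.isCompact (isClosed_iInter fun i => ultrafilter_isClosed_basic _)
  · intro U hU V hV
    rw [Set.mem_iInter] at *
    intro n
    rw [Set.mem_setOf_eq, Ultrafilter.eventually_mul]
    filter_upwards [hU n] with m hm
    obtain ⟨n', hn⟩ := FP.mul hm
    filter_upwards [hV (n' + n)] with m' hm'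
    apply hn
    simpa only [Stream'.drop_drop, Nat.add_comm n n'] using hm'

end FUsg

section GG

lemma GGaux (U : Ultrafilter (Finset ℕ)) (hU : U * U = U)
    (hdrop : ∀ n, {m : Finset ℕ | m ∈ FP (sing.drop n)} ∈ U)
    (c : Set (Finset ℕ)) (hc : c ∈ U) :
    ∀ k : ℕ, ∃ (T : ℕ → Finset ℕ) (B : ℕ),
      (∀ t < k, (T t).Nonempty) ∧
      (∀ t < k, ∀ i ∈ T t, i < B) ∧
      (∀ s t : ℕ, s < t → t < k → ∀ i ∈ T s, ∀ j ∈ T t, i < j) ∧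
      (∀ K : Finset ℕ, K.Nonempty → (∀ t ∈ K, t < k) → K.sup T ∈ ustar U c) := by
  intro k
  induction k with
  | zero =>
    exact ⟨fun _ => ∅, 0, fun t ht => absurd ht (by omega), fun t ht => absurd ht (by omega),
      fun s t _ ht => absurd ht (by omega),
      fun K hK hlt => absurd (hlt _ hK.choose_spec) (by omega)⟩
  | succ k ih =>
    obtain ⟨T, B, h1, h2, h3, h4⟩ := ih
    -- the sets we need the new element to lie in
    set f : Finset ℕ → Set (Finset ℕ) :=
      fun K => {r | K.Nonempty → (∀ t ∈ K, t < k) → (K.sup T) * r ∈ ustar U c} with hf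
    have hfU : ∀ K, f K ∈ U := by
      intro K
      by_cases hK : K.Nonempty ∧ ∀ t ∈ K, t < k
      · have : K.sup T ∈ ustar U c := h4 K hK.1 hK.2
        refine Filter.mem_of_superset (ustar_shift hU this) ?_
        intro r hr
        exact fun _ _ => hr
      · refine Filter.univ_mem' ?_
        intro r hne hlt
        exact absurd ⟨hne, hlt⟩ hK
    have hS : (ustar U c ∩ ((⋂ K ∈ (Finset.range k).powerset, f K) ∩
        {m : Finset ℕ | m ∈ FP (sing.drop B)})) ∈ U :=
      Filter.inter_mem (ustar_mem hU hc)
        (Filter.inter_mem (Filter.biInter_finset_mem _ |>.mpr fun K _ => hfU K) (hdrop B))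
    obtain ⟨m, hm_star, hm_f, hm_fp⟩ := Ultrafilter.nonempty_of_mem hS
    have hm_spec := FP_sing_spec m _ hm_fp B rfl
    have hm_ne : m.Nonempty := hm_spec.1
    have hm_ge : ∀ i ∈ m, B ≤ i := hm_spec.2
    set B' : ℕ := m.max' hm_ne + 1 with hB'
    have hBB' : B ≤ m.max' hm_ne := le_trans (hm_ge _ (m.max'_mem hm_ne)) (le_refl _)
    refine ⟨Function.update T k m, B', ?_, ?_, ?_, ?_⟩
    · intro t ht
      rcases Nat.lt_succ_iff_lt_or_eq.mp ht with ht | rfl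
      · rw [Function.update_of_ne (by omega)]; exact h1 t ht
      · rw [Function.update_self]; exact hm_ne
    · intro t ht i hi
      rcases Nat.lt_succ_iff_lt_or_eq.mp ht with ht | rfl
      · rw [Function.update_of_ne (by omega)] at hi
        have := h2 t ht i hi; omega
      · rw [Function.update_self] at hi
        have := Finset.le_max' _ _ hi; omega
    · intro s t hst ht i hi j hj
      rcases Nat.lt_succ_iff_lt_or_eq.mp ht with ht | rfl
      · rw [Function.update_of_ne (by omega)] at hi hj
        exact h3 s t hst ht i hi j hj
      · rw [Function.update_of_ne (by omega)] at hi
        rw [Function.update_self] at hj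
        have := h2 s hst i hi
        have := hm_ge j hj
        omega
    · intro K hK hlt
      by_cases hkK : k ∈ K
      · set K₀ := K.erase k with hK₀
        have hK₀lt : ∀ t ∈ K₀, t < k := by
          intro t ht
          have := hlt t (Finset.erase_subset _ _ ht)
          have := Finset.ne_of_mem_erase ht
          omega
        have hsup : K.sup (Function.update T k m) = K₀.sup (Function.update T k m) ⊔ m := by
          rw [← Finset.insert_erase hkK, Finset.sup_insert, Function.update_self, sup_comm, hK₀]
        have hsup0 : K₀.sup (Function.update T k m) = K₀.sup T :=
          Finset.sup_congr rfl fun t ht => Function.update_of_ne (by have := hK₀lt t ht; omega) _ _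
        rcases K₀.eq_empty_or_nonempty with hK₀e | hK₀ne
        · rw [hsup, hK₀e]
          simpa using hm_star
        · have hq : K₀.sup T ∈ ustar U c := h4 K₀ hK₀ne hK₀lt
          have := hm_f
          rw [Set.mem_iInter₂] at this
          have hfm := this K₀ (Finset.mem_powerset.mpr (fun t ht =>
            Finset.mem_range.mpr (hK₀lt t ht))) hK₀ne hK₀lt
          rw [hsup, hsup0]
          have : K₀.sup T * m = K₀.sup T ⊔ m := rfl
          rw [← this]
          exact hfm
      · have hlt' : ∀ t ∈ K, t < k := by
          intro t ht
          have := hlt t ht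
          rcases Nat.lt_succ_iff_lt_or_eq.mp this with h | rfl
          · exact h
          · exact absurd ht hkK
        have : K.sup (Function.update T k m) = K.sup T :=
          Finset.sup_congr rfl fun t ht => Function.update_of_ne (by have := hlt' t ht; omega) _ _
        rw [this]
        exact h4 K hK hlt'

end GG

section GG2

lemma finiteGG (U : Ultrafilter (Finset ℕ)) (hU : U * U = U)
    (hdrop : ∀ n, {m : Finset ℕ | m ∈ FP (sing.drop n)} ∈ U)
    (c : Set (Finset ℕ)) (hc : c ∈ U) (k : ℕ) :
    ∃ T : Fin k → Finset ℕ, (∀ t, (T t).Nonempty) ∧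
      (∀ s t : Fin k, s ≠ t → Disjoint (T s) (T t)) ∧
      (∀ K : Finset (Fin k), K.Nonempty → K.sup T ∈ c) := by
  obtain ⟨T, B, h1, h2, h3, h4⟩ := GGaux U hU hdrop c hc k
  refine ⟨fun t => T t, fun t => h1 t t.isLt, ?_, ?_⟩
  · intro s t hst
    rw [Finset.disjoint_left]
    intro i his hit
    rcases Ne.lt_or_gt (fun h => hst (Fin.ext h) : (s : ℕ) ≠ (t : ℕ)) with h | h
    · exact absurd rfl (Nat.ne_of_lt (h3 s t h t.isLt i his i hit))
    · exact absurd rfl (Nat.ne_of_lt (h3 t s h s.isLt i hit i his))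
  · intro K hK
    have : K.sup (fun t => T t) = (K.image (Fin.val)).sup T := by
      rw [Finset.sup_image]
      rfl
    rw [this]
    refine ustar_subset U c (h4 _ (hK.image _) ?_)
    intro t ht
    obtain ⟨j, _, rfl⟩ := Finset.mem_image.mp ht
    exact j.isLt

end GG2

section Blocks
variable {ι : Type*} [DecidableEq ι]

/-- triangular numbers -/
def tri : ℕ → ℕ
  | 0 => 0
  | n + 1 => tri n + (n + 1)

lemma top_subset (u : ι → ℕ) : ∀ (k : ℕ) (s : Finset ι), k ≤ s.card →
    ∃ T ⊆ s, T.card = k ∧ ∀ a ∈ T, ∀ b ∈ s \ T, u b ≤ u a := by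
  intro k
  induction k with
  | zero => exact fun s _ => ⟨∅, Finset.empty_subset s, Finset.card_empty, by simp⟩
  | succ k ih =>
    intro s hs
    obtain ⟨T, hTs, hTc, hTd⟩ := ih s (by omega)
    have hne : (s \ T).Nonempty := by
      rw [← Finset.card_pos, Finset.card_sdiff_of_subset hTs]
      omega
    obtain ⟨a, ha, hamax⟩ := Finset.exists_max_image (s \ T) u hne
    have haT : a ∉ T := (Finset.mem_sdiff.mp ha).2
    refine ⟨insert a T, ?_, ?_, ?_⟩
    · exact Finset.insert_subset (Finset.mem_sdiff.mp ha).1 hTs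
    · rw [Finset.card_insert_of_notMem haT, hTc]
    · intro x hx b hb
      have hb' : b ∈ s \ T := by
        rw [Finset.mem_sdiff] at hb ⊢
        exact ⟨hb.1, fun h => hb.2 (Finset.mem_insert_of_mem h)⟩
      rcases Finset.mem_insert.mp hx with rfl | hx
      · exact hamax b hb'
      · exact hTd x hx b hb'

lemma blocks_lemma : ∀ (n : ℕ) (s : Finset ι) (u : ι → ℕ), (∀ j ∈ s, 0 < u j) →
    tri n ≤ s.card →
    ∃ K : Fin n → Finset ι, (∀ t, K t ⊆ s) ∧ (∀ t, (K t).Nonempty) ∧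
      (∀ t, (K t).card ≤ (t : ℕ) + 1) ∧
      (∀ a b : Fin n, a ≠ b → Disjoint (K a) (K b)) ∧
      StrictMono (fun t => ∑ j ∈ K t, u j) := by
  intro n
  induction n with
  | zero =>
    exact fun s u _ _ => ⟨fun t => t.elim0, fun t => t.elim0, fun t => t.elim0,
      fun t => t.elim0, fun t => t.elim0, fun a => a.elim0⟩
  | succ n ih =>
    intro s u hu hcard
    rw [tri] at hcard
    obtain ⟨T, hTs, hTc, hTd⟩ := top_subset u (n + 1) s (by omega)
    have hs'card : tri n ≤ (s \ T).card := by
      rw [Finset.card_sdiff_of_subset hTs]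
      omega
    obtain ⟨K', hK's, hK'ne, hK'c, hK'd, hK'sm⟩ := ih (s \ T) u
      (fun j hj => hu j (Finset.mem_sdiff.mp hj).1) hs'card
    set K : Fin (n + 1) → Finset ι := fun t =>
      if h : (t : ℕ) < n then K' ⟨t, h⟩ else T with hK
    have hKval : ∀ t : Fin (n+1), (h : (t : ℕ) < n) → K t = K' ⟨t, h⟩ := by
      intro t h; simp [hK, h]
    have hKlast : ∀ t : Fin (n+1), (t : ℕ) = n → K t = T := by
      intro t h; simp [hK, h]
    have hTne : T.Nonempty := by rw [← Finset.card_pos, hTc]; omega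
    -- the key sum comparison
    have hkey : ∀ (t : Fin n), ∑ j ∈ K' t, u j < ∑ j ∈ T, u j := by
      intro t
      obtain ⟨a₀, ha₀, ha₀min⟩ := Finset.exists_min_image T u hTne
      have hub : ∀ j ∈ K' t, u j ≤ u a₀ := fun j hj => hTd a₀ ha₀ j (hK's t hj)
      calc ∑ j ∈ K' t, u j ≤ (K' t).card * u a₀ := by
              simpa using Finset.sum_le_card_nsmul (K' t) u (u a₀) hub
        _ ≤ ((t : ℕ) + 1) * u a₀ := Nat.mul_le_mul_right _ (hK'c t)
        _ ≤ n * u a₀ := Nat.mul_le_mul_right _ (by omega)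
        _ < (n + 1) * u a₀ := by
              have : 0 < u a₀ := hu a₀ (hTs ha₀)
              nlinarith
        _ = T.card * u a₀ := by rw [hTc]
        _ ≤ ∑ j ∈ T, u j := by
              simpa using Finset.card_nsmul_le_sum T u (u a₀) ha₀min
    refine ⟨K, ?_, ?_, ?_, ?_, ?_⟩
    · intro t
      by_cases h : (t : ℕ) < n
      · rw [hKval t h]; exact (hK's _).trans (Finset.sdiff_subset)
      · rw [hKlast t (by omega)]; exact hTs
    · intro t
      by_cases h : (t : ℕ) < n
      · rw [hKval t h]; exact hK'ne _
      · rw [hKlast t (by omega)]; exact hTne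
    · intro t
      by_cases h : (t : ℕ) < n
      · rw [hKval t h]; exact hK'c _
      · rw [hKlast t (by omega), hTc]; omega
    · intro a b hab
      by_cases ha : (a : ℕ) < n <;> by_cases hb : (b : ℕ) < n
      · rw [hKval a ha, hKval b hb]
        exact hK'd _ _ (fun h => hab (by
          have := Fin.mk.injEq (a : ℕ) ha (b : ℕ) hb ▸ h
          exact Fin.ext (by simpa [Fin.mk.injEq] using congrArg Fin.val h)))
      · rw [hKval a ha, hKlast b (by omega)]
        exact Finset.disjoint_left.mpr fun i hi hit =>
          (Finset.mem_sdiff.mp (hK's _ hi)).2 hit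
      · rw [hKlast a (by omega), hKval b hb]
        exact Finset.disjoint_right.mpr fun i hi hit =>
          (Finset.mem_sdiff.mp (hK's _ hi)).2 hit
      · exact absurd (Fin.ext (by omega)) hab
    · intro a b hab
      simp only
      have hb' : (a : ℕ) < n := by
        have hba : (a : ℕ) < (b : ℕ) := hab
        have := b.isLt
        omega
      rw [hKval a hb']
      by_cases h : (b : ℕ) < n
      · rw [hKval b h]
        exact hK'sm (show (⟨a, hb'⟩ : Fin n) < ⟨b, h⟩ from hab)
      · rw [hKlast b (by omega)]
        exact hkey _
end Blocks

section SumHelp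

lemma sum_attachFin (n : ℕ) (s : Finset ℕ) (h : ∀ m ∈ s, m < n) (g : ℕ → ℕ) :
    ∑ j ∈ s.attachFin h, g (j : ℕ) = ∑ i ∈ s, g i := by
  apply Finset.sum_bij (fun (j : Fin n) _ => (j : ℕ))
  · intro a ha; exact (Finset.mem_attachFin h).mp ha
  · intro a _ b _ hab; exact Fin.ext hab
  · intro i hi; exact ⟨⟨i, h i hi⟩, (Finset.mem_attachFin h).mpr hi, rfl⟩
  · intro a _; rfl

end SumHelp

section Assemble

lemma exists_witness {E : Set ℕ+} (n : ℕ) (u : Fin (tri n) → ℕ) (hupos : ∀ t, 0 < u t)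
    (hmem : ∀ K : Finset (Fin (tri n)), K.Nonempty →
      ∃ p : ℕ+, p ∈ E ∧ (p : ℕ) = ∑ t ∈ K, u t) :
    ∃ z : Fin n → ℕ+, StrictMono z ∧ FS (Set.range z) ⊆ E := by
  obtain ⟨K, _, hKne, _, hKd, hKsm⟩ := blocks_lemma n (Finset.univ : Finset (Fin (tri n))) u
    (fun j _ => hupos j) (by simp)
  have hzpos : ∀ t : Fin n, 0 < ∑ j ∈ K t, u j :=
    fun t => Finset.sum_pos (fun j _ => hupos j) (hKne t)
  set z : Fin n → ℕ+ := fun t => ⟨∑ j ∈ K t, u j, hzpos t⟩ with hz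
  have hzsm : StrictMono z := fun s t hst => by
    have := hKsm hst
    exact this
  refine ⟨z, hzsm, ?_⟩
  intro p hp
  obtain ⟨L, hLne, hLsum⟩ := FS_range_elim hzsm.injective hp
  have hsum2 : (p : ℕ) = ∑ j ∈ L.biUnion K, u j := by
    rw [hLsum, Finset.sum_biUnion]
    · rfl
    · intro s hs t ht hst
      exact hKd s t hst
  have hbne : (L.biUnion K).Nonempty := by
    obtain ⟨t, ht⟩ := hLne
    obtain ⟨j, hj⟩ := hKne t
    exact ⟨j, Finset.mem_biUnion.mpr ⟨t, ht, hj⟩⟩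
  obtain ⟨p', hp'E, hp'⟩ := hmem (L.biUnion K) hbne
  have : p' = p := PNat.coe_injective (by rw [hp', hsum2])
  rwa [← this]

lemma fal_union {C D : Set ℕ+} (hCD : FAL (C ∪ D)) : FAL C ∨ FAL D := by
  by_contra hcon
  push_neg at hcon
  obtain ⟨hC, hD⟩ := hcon
  rw [FAL] at hC hD
  push_neg at hC hD
  obtain ⟨a, ha⟩ := hC
  obtain ⟨b, hb⟩ := hD
  set n := max a b with hn
  -- reduce a witness of size n to a contradiction
  have noWitC : ∀ z : Fin n → ℕ+, StrictMono z → ¬ FS (Set.range z) ⊆ C := by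
    intro z hzsm hFS
    refine ha (z ∘ Fin.castLE (le_max_left a b)) (hzsm.comp (fun i j hij => hij)) ?_
    exact (FS_mono (Set.range_comp_subset_range _ _)).trans hFS
  have noWitD : ∀ z : Fin n → ℕ+, StrictMono z → ¬ FS (Set.range z) ⊆ D := by
    intro z hzsm hFS
    refine hb (z ∘ Fin.castLE (le_max_right a b)) (hzsm.comp (fun i j hij => hij)) ?_
    exact (FS_mono (Set.range_comp_subset_range _ _)).trans hFS
  set k := tri n with hk
  obtain ⟨U, hU, hdrop⟩ := exists_idem_drop
  obtain ⟨W, hW⟩ := Ultrafilter.exists_le (Filter.cofinite : Filter ℕ)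
  choose x hxsm hxFS using hCD
  set xval : ℕ → ℕ → ℕ := fun N i => if h : i < N then (x N ⟨i, h⟩ : ℕ) else 0 with hxval
  set sg : ℕ → Finset ℕ → ℕ := fun N S => ∑ i ∈ S, xval N i with hsg
  set Cnat : Set ℕ := {q | ∃ p : ℕ+, p ∈ C ∧ (p : ℕ) = q} with hCnat
  set cgood : Set (Finset ℕ) := {m | {N | sg N m ∈ Cnat} ∈ W} with hcgood
  -- the class and the property
  have main : ∀ (cc : Set (Finset ℕ)), cc ∈ U → ∀ (P : ℕ → Finset ℕ → Prop),
      (∀ m ∈ cc, {N | P N m} ∈ W) →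
      ∃ (T : Fin k → Finset ℕ) (N : ℕ),
        (∀ t, (T t).Nonempty) ∧ (∀ s t : Fin k, s ≠ t → Disjoint (T s) (T t)) ∧
        (∀ t, ∀ i ∈ T t, i < N) ∧
        (∀ K : Finset (Fin k), K.Nonempty → P N (K.sup T)) := by
    intro cc hcc P hP
    obtain ⟨T, hTne, hTd, hTc⟩ := finiteGG U hU hdrop cc hcc k
    set bigT := Finset.univ.sup T with hbigT
    have hcof : {N : ℕ | ∀ i ∈ bigT, i < N} ∈ (W : Filter ℕ) := by
      apply hW
      rw [Filter.mem_cofinite]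
      apply Set.Finite.subset (Set.finite_Iic (bigT.sup id))
      intro N hN
      simp only [Set.mem_compl_iff, Set.mem_setOf_eq, not_forall] at hN
      obtain ⟨i, hi, hNi⟩ := hN
      exact Set.mem_Iic.mpr (le_trans (not_lt.mp hNi) (Finset.le_sup (f := id) hi))
    have hKmem : (⋂ K : Finset (Fin k), {N | K.Nonempty → P N (K.sup T)}) ∈ (W : Filter ℕ) := by
      refine Filter.iInter_mem.mpr fun K => ?_
      by_cases hKne : K.Nonempty
      · exact Filter.mem_of_superset (hP _ (hTc K hKne)) fun N hN _ => hN
      · exact Filter.univ_mem' fun N h => absurd h hKne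
    obtain ⟨N, hN1, hN2⟩ := Ultrafilter.nonempty_of_mem (Filter.inter_mem hcof hKmem)
    refine ⟨T, N, hTne, hTd, ?_, ?_⟩
    · intro t i hi
      exact hN1 i (Finset.mem_sup.mpr ⟨t, Finset.mem_univ t, hi⟩ : i ∈ bigT)
    · intro K hKne
      exact Set.mem_iInter.mp hN2 K hKne
  -- given T, N from `main`, build u and the sum identity
  have build : ∀ (T : Fin k → Finset ℕ) (N : ℕ), (∀ t, (T t).Nonempty) →
      (∀ s t : Fin k, s ≠ t → Disjoint (T s) (T t)) → (∀ t, ∀ i ∈ T t, i < N) →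
      ∃ u : Fin k → ℕ, (∀ t, 0 < u t) ∧
        (∀ K : Finset (Fin k), sg N (K.sup T) = ∑ t ∈ K, u t) ∧
        (∀ K : Finset (Fin k), K.Nonempty → ∃ p : ℕ+,
          p ∈ FS (Set.range (x N)) ∧ (p : ℕ) = sg N (K.sup T)) := by
    intro T N hTne hTd hTlt
    refine ⟨fun t => sg N (T t), ?_, ?_, ?_⟩
    · intro t
      obtain ⟨i, hi⟩ := hTne t
      refine Finset.sum_pos' (fun j _ => Nat.zero_le _) ⟨i, hi, ?_⟩
      simp only [hxval]
      rw [dif_pos (hTlt t i hi)]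
      exact (x N _).pos
    · intro K
      simp only [hsg]
      rw [Finset.sup_eq_biUnion, Finset.sum_biUnion]
      intro s hs t ht hst
      exact hTd s t hst
    · intro K hKne
      set S := K.sup T with hS
      have hSlt : ∀ i ∈ S, i < N := by
        intro i hi
        obtain ⟨t, _, hit⟩ := Finset.mem_sup.mp hi
        exact hTlt t i hit
      have hSne : S.Nonempty := by
        obtain ⟨t, ht⟩ := hKne
        obtain ⟨i, hi⟩ := hTne t
        exact ⟨i, Finset.mem_sup.mpr ⟨t, ht, hi⟩⟩
      have hsum : sg N S = ∑ j ∈ S.attachFin hSlt, (x N j : ℕ) := by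
        rw [show (∑ j ∈ S.attachFin hSlt, (x N j : ℕ))
            = ∑ j ∈ S.attachFin hSlt, xval N (j : ℕ) from ?_]
        · exact (sum_attachFin N S hSlt (xval N)).symm
        · apply Finset.sum_congr rfl
          intro j _
          simp only [hxval]
          rw [dif_pos j.isLt]
      have hane : (S.attachFin hSlt).Nonempty := by
        obtain ⟨i, hi⟩ := hSne
        exact ⟨⟨i, hSlt i hi⟩, (Finset.mem_attachFin hSlt).mpr hi⟩
      have hpos : 0 < sg N S := by
        rw [hsum]
        exact Finset.sum_pos (fun j _ => (x N j).pos) hane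
      refine ⟨⟨sg N S, hpos⟩, ?_, rfl⟩
      exact mem_FS_of_sum (hxsm N).injective (fun i => Set.mem_range_self i)
        (S.attachFin hSlt) hane _ hsum
  by_cases hcg : cgood ∈ U
  · -- C side
    obtain ⟨T, N, hTne, hTd, hTlt, hTP⟩ := main cgood hcg (fun N m => sg N m ∈ Cnat)
      (fun m hm => hm)
    obtain ⟨u, hupos, husum, _⟩ := build T N hTne hTd hTlt
    obtain ⟨z, hzsm, hzFS⟩ := exists_witness (E := C) n u hupos (by
      intro K hKne
      have := hTP K hKne
      rw [husum K] at this
      obtain ⟨p, hpC, hp⟩ := this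
      exact ⟨p, hpC, hp⟩)
    exact noWitC z hzsm hzFS
  · -- D side
    have hcg' : cgoodᶜ ∈ U := Ultrafilter.compl_mem_iff_notMem.mpr hcg
    obtain ⟨T, N, hTne, hTd, hTlt, hTP⟩ := main cgoodᶜ hcg' (fun N m => sg N m ∉ Cnat)
      (fun m hm => by
        have : {N | sg N m ∈ Cnat} ∉ W := hm
        have h2 : {N | sg N m ∈ Cnat}ᶜ ∈ W := Ultrafilter.compl_mem_iff_notMem.mpr this
        exact h2)
    obtain ⟨u, hupos, husum, hFSmem⟩ := build T N hTne hTd hTlt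
    obtain ⟨z, hzsm, hzFS⟩ := exists_witness (E := D) n u hupos (by
      intro K hKne
      obtain ⟨p, hpFS, hp⟩ := hFSmem K hKne
      have hpCD : p ∈ C ∪ D := hxFS N hpFS
      have hnot : sg N (K.sup T) ∉ Cnat := hTP K hKne
      have hpD : p ∈ D := by
        rcases hpCD with hpC | hpD
        · exact absurd ⟨p, hpC, hp.symm ▸ rfl⟩ hnot
        · exact hpD
      rw [husum K] at hp
      exact ⟨p, hpD, hp⟩)
    exact noWitD z hzsm hzFS

end Assemble


end Aux

/-- The family `{A | Aᶜ is not FAL}` is an additive proper filter: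
all its members are nonempty, it contains `ℕ+`, it is closed under supersets
and finite intersections, and it is additive (`F ⊆ F ⊕ V` for every ultrafilter
`V ⊇ F`). -/
theorem statement15 :
    (∀ A ∈ falFamily, A.Nonempty) ∧
    Set.univ ∈ falFamily ∧
    (∀ A B : Set ℕ+, A ∈ falFamily → A ⊆ B → B ∈ falFamily) ∧
    (∀ A B : Set ℕ+, A ∈ falFamily → B ∈ falFamily → A ∩ B ∈ falFamily) ∧
    (∀ V : Ultrafilter ℕ+, (∀ A ∈ falFamily, A ∈ (V : Filter ℕ+)) →
      ∀ A ∈ falFamily, {n | shiftSet A n ∈ (V : Filter ℕ+)} ∈ falFamily) := by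
  refine ⟨?_, ?_, ?_, ?_, ?_⟩
  · intro A hA
    rw [Set.nonempty_iff_ne_empty]
    rintro rfl
    exact hA (by rw [Set.compl_empty]; exact FAL_univ)
  · show ¬ FAL (Set.univ : Set ℕ+)ᶜ
    rw [Set.compl_univ]
    exact not_FAL_empty
  · intro A B hA hAB hB
    exact hA (FAL_of_subset (Set.compl_subset_compl.mpr hAB) hB)
  · intro A B hA hB hAB
    rw [Set.compl_inter] at hAB
    rcases fal_union hAB with h | h
    · exact hA h
    · exact hB h
  · exact additive_conj
end

section
/- The filter F = {A ⊆ ℕ : the complement of A is not finitely additively large} is not idempotent: F is not contained in F ⊕ F, i.e., there exists a set A ∈ F with A ∉ F ⊕ F. -/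
open Filter Set

namespace St16

def nt (t : ℕ) : ℕ := t.unpair.1 + 1
def mt (t : ℕ) : ℕ := t.unpair.2 + 1
def Lf (t : ℕ) : ℕ := (t+1)*(t+1)

def Cset : Set ℕ :=
  {z | ∃ t : ℕ, ∃ F : Finset ℕ, F.Nonempty ∧ F ⊆ Finset.Icc 1 (mt t) ∧
    z = nt t + ∑ a ∈ F, 4^(Lf t + a)}

lemma nt_le (t : ℕ) : nt t ≤ t + 1 := Nat.add_le_add_right (Nat.unpair_left_le t) 1
lemma mt_le (t : ℕ) : mt t ≤ t + 1 := Nat.add_le_add_right (Nat.unpair_right_le t) 1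
lemma nt_pos (t : ℕ) : 0 < nt t := Nat.succ_pos _

lemma pow4_le {a b : ℕ} (h : a ≤ b) : (4:ℕ)^a ≤ 4^b := Nat.pow_le_pow_right (by norm_num) h

lemma sum_pow_lt (L m : ℕ) : ∑ a ∈ Finset.Icc 1 m, 4^(L+a) < 4^(L+m+1) := by
  induction m with
  | zero =>
      rw [Finset.Icc_eq_empty (by omega), Finset.sum_empty]
      positivity
  | succ m ih =>
      rw [Finset.sum_Icc_succ_top (by omega)]
      have h1 : (4:ℕ)^(L+m+1) ≤ 4^(L+(m+1)) := pow4_le (by omega)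
      have h2 : (4:ℕ)^(L+(m+1)) + 4^(L+(m+1)) ≤ 4^(L+(m+1)+1) := by
        have : (4:ℕ)^(L+(m+1)+1) = 4^(L+(m+1)) * 4 := pow_succ 4 _
        omega
      omega

lemma block_lower {t : ℕ} {F : Finset ℕ} (hne : F.Nonempty)
    (hsub : F ⊆ Finset.Icc 1 (mt t)) :
    4^(Lf t + 1) ≤ nt t + ∑ a ∈ F, 4^(Lf t + a) := by
  obtain ⟨a, ha⟩ := hne
  have h1 : 1 ≤ a := (Finset.mem_Icc.mp (hsub ha)).1
  have h2 : (4:ℕ)^(Lf t + 1) ≤ 4^(Lf t + a) := pow4_le (by omega)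
  have h3 : (4:ℕ)^(Lf t + a) ≤ ∑ a ∈ F, 4^(Lf t + a) :=
    Finset.single_le_sum (f := fun a => 4^(Lf t + a)) (fun i _ => Nat.zero_le _) ha
  omega

lemma block_upper {t : ℕ} {F : Finset ℕ}
    (hsub : F ⊆ Finset.Icc 1 (mt t)) :
    nt t + ∑ a ∈ F, 4^(Lf t + a) < 4^(Lf t + t + 3) := by
  have h1 : ∑ a ∈ F, 4^(Lf t + a) ≤ ∑ a ∈ Finset.Icc 1 (mt t), 4^(Lf t + a) :=
    Finset.sum_le_sum_of_subset hsub
  have h2 : ∑ a ∈ Finset.Icc 1 (mt t), 4^(Lf t + a) < 4^(Lf t + mt t + 1) :=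
    sum_pow_lt _ _
  have h3 : (4:ℕ)^(Lf t + mt t + 1) ≤ 4^(Lf t + t + 2) := pow4_le (by have := mt_le t; omega)
  have h4 : nt t < 4^(Lf t + t + 2) := by
    calc nt t ≤ t + 1 := nt_le t
    _ < 4^(t+1) := Nat.lt_pow_self (by norm_num)
    _ ≤ 4^(Lf t + t + 2) := pow4_le (by omega)
  have h5 : (4:ℕ)^(Lf t + t + 2) + 4^(Lf t + t + 2) ≤ 4^(Lf t + t + 3) := by
    have : (4:ℕ)^(Lf t + t + 3) = 4^(Lf t + t + 2) * 4 := pow_succ 4 _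
    omega
  omega

lemma two_hi_le_lo_succ (t : ℕ) : 2 * 4^(Lf t + t + 3) ≤ 4^(Lf (t+1) + 1) := by
  have h1 : 2 * (4:ℕ)^(Lf t + t + 3) ≤ 4^(Lf t + t + 4) := by
    have : (4:ℕ)^(Lf t + t + 4) = 4^(Lf t + t + 3) * 4 := pow_succ 4 _
    omega
  have h2 : (4:ℕ)^(Lf t + t + 4) ≤ 4^(Lf (t+1) + 1) := by
    apply pow4_le
    simp only [Lf]
    nlinarith
  omega

lemma lo_mono {i j : ℕ} (h : i ≤ j) : (4:ℕ)^(Lf i + 1) ≤ 4^(Lf j + 1) := by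
  apply pow4_le
  have : Lf i ≤ Lf j := by simp only [Lf]; nlinarith
  omega

lemma hi_le_lo_succ (t : ℕ) : (4:ℕ)^(Lf t + t + 3) ≤ 4^(Lf (t+1) + 1) := by
  have := two_hi_le_lo_succ t; omega

lemma hi_mono {i j : ℕ} (h : i ≤ j) : (4:ℕ)^(Lf i + i + 3) ≤ 4^(Lf j + j + 3) := by
  apply pow4_le
  have : Lf i ≤ Lf j := by simp only [Lf]; nlinarith
  omega

lemma dvd_block_sum {t : ℕ} {F : Finset ℕ} (hsub : F ⊆ Finset.Icc 1 (mt t)) :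
    4^(Lf t + 1) ∣ ∑ a ∈ F, 4^(Lf t + a) := by
  apply Finset.dvd_sum
  intro a ha
  exact pow_dvd_pow 4 (by have := (Finset.mem_Icc.mp (hsub ha)).1; omega)

lemma sumfree : ∀ x ∈ Cset, ∀ y ∈ Cset, x + y ∉ Cset := by
  have key : ∀ i j : ℕ, i ≤ j → ∀ x y : ℕ,
      (∃ F : Finset ℕ, F.Nonempty ∧ F ⊆ Finset.Icc 1 (mt i) ∧
        x = nt i + ∑ a ∈ F, 4^(Lf i + a)) →
      (∃ G : Finset ℕ, G.Nonempty ∧ G ⊆ Finset.Icc 1 (mt j) ∧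
        y = nt j + ∑ a ∈ G, 4^(Lf j + a)) →
      x + y ∉ Cset := by
    intro i j hij x y ⟨F, hFne, hFsub, hx⟩ ⟨G, hGne, hGsub, hy⟩ ⟨k, H, hHne, hHsub, hz⟩
    -- bounds
    have hxl : 4^(Lf i + 1) ≤ x := hx ▸ block_lower hFne hFsub
    have hxu : x < 4^(Lf i + i + 3) := hx ▸ block_upper hFsub
    have hyl : 4^(Lf j + 1) ≤ y := hy ▸ block_lower hGne hGsub
    have hyu : y < 4^(Lf j + j + 3) := hy ▸ block_upper hGsub
    have hzl : 4^(Lf k + 1) ≤ x + y := hz ▸ block_lower hHne hHsub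
    have hzu : x + y < 4^(Lf k + k + 3) := hz ▸ block_upper hHsub
    -- k = j
    have hkj : k = j := by
      rcases lt_trichotomy k j with h | h | h
      · -- x + y < hi k ≤ lo j ≤ y, contradiction
        have h1 : (4:ℕ)^(Lf k + k + 3) ≤ 4^(Lf (k+1) + 1) := hi_le_lo_succ k
        have h2 : (4:ℕ)^(Lf (k+1) + 1) ≤ 4^(Lf j + 1) := lo_mono (by omega)
        omega
      · exact h
      · -- lo k ≤ x + y < 2 * hi j ≤ lo (j+1) ≤ lo k, contradiction
        have h1 : x < 4^(Lf j + j + 3) := lt_of_lt_of_le hxu (hi_mono hij)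
        have h2 : 2 * 4^(Lf j + j + 3) ≤ 4^(Lf (j+1) + 1) := two_hi_le_lo_succ j
        have h3 : (4:ℕ)^(Lf (j+1) + 1) ≤ 4^(Lf k + 1) := lo_mono (by omega)
        omega
    rw [hkj] at hHsub hz hzl hzu
    -- cancel
    have hdH := dvd_block_sum hHsub
    have hdG := dvd_block_sum hGsub
    have hdx : 4^(Lf j + 1) ∣ x := by
      have hx' : x = (∑ a ∈ H, 4^(Lf j + a)) - ∑ a ∈ G, 4^(Lf j + a) := by omega
      rw [hx']
      exact Nat.dvd_sub hdH hdG
    rcases Nat.eq_or_lt_of_le hij with heq' | hlt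
    · -- i = j : x ≡ nt j mod M, 0 < nt j < M
      rw [heq'] at hFsub hx
      have hdF := dvd_block_sum hFsub
      have hdn : 4^(Lf j + 1) ∣ nt j := by
        have hn' : nt j = x - ∑ a ∈ F, 4^(Lf j + a) := by omega
        rw [hn']
        exact Nat.dvd_sub hdx hdF
      have h1 : 4^(Lf j + 1) ≤ nt j := Nat.le_of_dvd (nt_pos j) hdn
      have h2 : nt j ≤ j + 1 := nt_le j
      have h3 : j + 1 < 4^(Lf j + 1) := by
        calc j + 1 < 4^(j+1) := Nat.lt_pow_self (by norm_num)
        _ ≤ 4^(Lf j + 1) := pow4_le (by simp only [Lf]; nlinarith)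
      omega
    · -- i < j : 0 < x < M
      have h1 : x < 4^(Lf j + 1) := by
        have ha : (4:ℕ)^(Lf i + i + 3) ≤ 4^(Lf (i+1) + 1) := hi_le_lo_succ i
        have hb : (4:ℕ)^(Lf (i+1) + 1) ≤ 4^(Lf j + 1) := lo_mono (by omega)
        omega
      have h2 : 4^(Lf j + 1) ≤ x := Nat.le_of_dvd (lt_of_lt_of_le (by positivity) hxl) hdx
      omega
  rintro x ⟨i, F, hF⟩ y ⟨j, G, hG⟩ hz
  rcases le_total i j with h | h
  · exact key i j h x y ⟨F, hF⟩ ⟨G, hG⟩ hz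
  · exact key j i h y x ⟨G, hG⟩ ⟨F, hF⟩ (by rwa [Nat.add_comm] at hz)

lemma shift_mem (n : ℕ) (hn : 0 < n) (m : ℕ) :
    ∃ x : Fin m → ℕ+, StrictMono x ∧
      ∀ G : Finset (Fin m), G.Nonempty → (n + ∑ i ∈ G, ((x i : ℕ))) ∈ Cset := by
  set t := Nat.pair (n-1) m with ht
  have hnt : nt t = n := by simp [nt, ht, Nat.unpair_pair]; omega
  have hmt : mt t = m + 1 := by simp [mt, ht, Nat.unpair_pair]
  refine ⟨fun i => ⟨4^(Lf t + (i:ℕ) + 1), by positivity⟩, ?_, ?_⟩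
  · intro i j hij
    have : (4:ℕ)^(Lf t + (i:ℕ) + 1) < 4^(Lf t + (j:ℕ) + 1) :=
      Nat.pow_lt_pow_right (by norm_num) (by have := Fin.lt_def.mp hij; omega)
    exact this
  · intro G hG
    refine ⟨t, G.image (fun i : Fin m => (i:ℕ)+1), hG.image _, ?_, ?_⟩
    · intro a ha
      simp only [Finset.mem_image] at ha
      obtain ⟨i, _, rfl⟩ := ha
      rw [Finset.mem_Icc, hmt]
      have := i.isLt
      omega
    · rw [hnt, Finset.sum_image]
      · rfl
      · intro i _ j _ hij
        exact Fin.ext (by simp only at hij; omega)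

lemma fal_univ : FAL (∅ : Set ℕ+)ᶜ := by
  intro m
  refine ⟨fun i => ⟨(i:ℕ)+1, Nat.succ_pos _⟩, ?_, fun p _ => Set.notMem_empty p⟩
  intro i j hij
  have : (i:ℕ) + 1 < (j:ℕ) + 1 := by have := Fin.lt_def.mp hij; omega
  exact this

theorem main :
    ∃ A ∈ falFamily, {n | shiftSet A n ∈ falFamily} ∉ falFamily := by
  refine ⟨{p : ℕ+ | (p:ℕ) ∉ Cset}, ?_, ?_⟩
  · -- the complement is not FAL: no FS of two elements
    intro hFAL
    obtain ⟨x, hmono, hsub⟩ := hFAL 2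
    have hab : x 0 < x 1 := hmono (show (0 : Fin 2) < 1 by decide)
    have mem : ∀ p : ℕ+, p ∈ FS (Set.range x) → (p:ℕ) ∈ Cset := by
      intro p hp
      have := hsub hp
      simpa using this
    have m0 : (x 0 : ℕ) ∈ Cset := mem _ ⟨{x 0}, Finset.singleton_nonempty _,
      by simp [Set.singleton_subset_iff], by simp⟩
    have m1 : (x 1 : ℕ) ∈ Cset := mem _ ⟨{x 1}, Finset.singleton_nonempty _,
      by simp [Set.singleton_subset_iff], by simp⟩
    have m01 : (x 0 : ℕ) + (x 1 : ℕ) ∈ Cset := by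
      have := mem (x 0 + x 1) ⟨{x 0, x 1}, Finset.insert_nonempty _ _, ?_, ?_⟩
      · simpa using this
      · intro q hq
        simp only [Finset.coe_insert, Finset.coe_singleton, Set.mem_insert_iff,
          Set.mem_singleton_iff] at hq
        rcases hq with rfl | rfl
        · exact ⟨0, rfl⟩
        · exact ⟨1, rfl⟩
      · rw [Finset.sum_pair (ne_of_lt hab)]
        simp
    exact sumfree _ m0 _ m1 m01
  · have hempty : {n | shiftSet {p : ℕ+ | (p:ℕ) ∉ Cset} n ∈ falFamily} = ∅ := by
      apply Set.eq_empty_iff_forall_notMem.mpr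
      intro n hn
      apply hn
      intro m
      obtain ⟨x, hmono, hx⟩ := shift_mem (n:ℕ) n.pos m
      refine ⟨x, hmono, ?_⟩
      rintro p ⟨F, hne, hsubF, hsum⟩
      rw [← Set.image_univ] at hsubF
      obtain ⟨G, -, hG⟩ := Finset.subset_set_image_iff.mp hsubF
      have hGne : G.Nonempty := by
        rcases hne with ⟨q, hq⟩
        rw [← hG] at hq
        obtain ⟨i, hi, -⟩ := Finset.mem_image.mp hq
        exact ⟨i, hi⟩
      have hsum2 : ∑ i ∈ G, ((x i : ℕ)) = (p:ℕ) := by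
        rw [← hsum, ← hG, Finset.sum_image]
        intro i _ j _ hij
        exact hmono.injective hij
      have hmem : ((n:ℕ) + (p:ℕ)) ∈ Cset := by
        rw [← hsum2]
        exact hx G hGne
      -- show p ∉ shiftSet A n, i.e. ¬ (p + n ∈ A)
      intro hp
      have : ((p + n : ℕ+) : ℕ) ∉ Cset := hp
      apply this
      rw [PNat.add_coe]
      rw [Nat.add_comm]
      exact hmem
    rw [hempty]
    intro h
    exact h fal_univ

end St16

/-- The filter `F = {A | Aᶜ is not FAL}` is not idempotent: there
is `A ∈ F` with `A ∉ F ⊕ F`, i.e. `{n | A − n ∈ F} ∉ F`. -/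
theorem statement16 :
    ∃ A ∈ falFamily, {n | shiftSet A n ∈ falFamily} ∉ falFamily :=
  St16.main
end
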